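/- arXiv:1912.08675 — 7 statements merged into one kernel-verified Lean document; each statement's English description precedes it below -/
import Mathlib

section
/- Let Γ be a graph, μ a degree-d polarization, and ι: (𝓔₁, D₁) → (𝓔₂, D₂) a specialization of degree-d pseudo-divisors on Γ (i.e., 𝓔₂ ⊆ 𝓔₁ and D₂ is the pushforward of D₁ under the induced contraction Γ^{𝓔₁} → Γ^{𝓔₂}). Then for every subset V ⊆ V(Γ), β_{𝓔₁,D₁}(V) ≤ β_{𝓔₂,D₂}(V). -/
open scoped Classical

/-- A finite multigraph: finite vertex and edge types, with source and target maps
(an orientation is fixed on each edge). -/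
structure Multigraph where
  V : Type
  E : Type
  [fintypeV : Fintype V]
  [fintypeE : Fintype E]
  [decEqV : DecidableEq V]
  [decEqE : DecidableEq E]
  s : E → V
  t : E → V

attribute [instance] Multigraph.fintypeV Multigraph.fintypeE
attribute [instance] Multigraph.decEqV Multigraph.decEqE

namespace Multigraph

variable (G : Multigraph)

/-- Adjacency using only edges in `F`. -/
def adjOn (F : Finset G.E) (u v : G.V) : Prop :=
  ∃ e ∈ F, (G.s e = u ∧ G.t e = v) ∨ (G.s e = v ∧ G.t e = u)

/-- Adjacency in `G`. -/
def adj : G.V → G.V → Prop := G.adjOn Finset.univ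

/-- `G` is connected. -/
def Connected : Prop := ∀ u v : G.V, Relation.EqvGen G.adj u v

/-- Number of connected components of the spanning subgraph with edge set `F`. -/
noncomputable def b0 (F : Finset G.E) : ℕ :=
  Nat.card (Quotient (Relation.EqvGen.setoid (G.adjOn F)))

/-- `E(A∖B, B∖A)`: the set of edges connecting `A∖B` to `B∖A`. -/
def crossEdges (A B : Finset G.V) : Finset G.E :=
  Finset.univ.filter fun e =>
    (G.s e ∈ A \ B ∧ G.t e ∈ B \ A) ∨ (G.s e ∈ B \ A ∧ G.t e ∈ A \ B)

/-- The valence of `v` in the edge set `F` (loops count twice). -/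
def valE (F : Finset G.E) (v : G.V) : ℕ :=
  (F.filter fun e => G.s e = v).card + (F.filter fun e => G.t e = v).card

/-- `β_D(S) = deg(D|_S) − μ(S) + δ_{Γ,S}/2`. -/
noncomputable def beta (μ : G.V → ℝ) (D : G.V → ℤ) (S : Finset G.V) : ℝ :=
  (∑ v ∈ S, (D v : ℝ)) - (∑ v ∈ S, μ v) + (G.crossEdges S Sᶜ).card / 2

end Multigraph

/-- A pseudo-divisor `(𝓔, D)` on `G`: a subset `𝓔` of edges and the divisor on the
subdivision `Γ^𝓔` which takes the value `−1` at each exceptional vertex; it is recorded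
by its values `D` on the original vertices. -/
structure PseudoDiv (G : Multigraph) where
  E : Finset G.E
  D : G.V → ℤ

namespace Multigraph

variable (G : Multigraph)

/-- The degree of a pseudo-divisor: `∑ D(v) − |𝓔|` (the exceptional vertices contribute `−1`). -/
def degP (P : PseudoDiv G) : ℤ := (∑ v, P.D v) - P.E.card

/-- `β_{𝓔,D}(S) = deg(D|_S) − μ_𝓔(S) + δ_{Γ_𝓔,S}/2`, where `μ_𝓔(v) = μ(v) + val_𝓔(v)/2`. -/
noncomputable def betaP (μ : G.V → ℝ) (P : PseudoDiv G) (S : Finset G.V) : ℝ :=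
  (∑ v ∈ S, (P.D v : ℝ)) - (∑ v ∈ S, (μ v + (G.valE P.E v : ℝ) / 2))
    + ((G.crossEdges S Sᶜ).filter fun e => e ∉ P.E).card / 2

/-- `(𝓔,D)` is `μ`-semistable. -/
def Semistable (μ : G.V → ℝ) (P : PseudoDiv G) : Prop :=
  ∀ S : Finset G.V, 0 ≤ G.betaP μ P S

/-- `(𝓔,D)` is `μ`-polystable: `β ≥ 0` always, with strict inequality whenever
`E(S,Sᶜ) ⊄ 𝓔`. -/
def Polystable (μ : G.V → ℝ) (P : PseudoDiv G) : Prop :=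
  ∀ S : Finset G.V, 0 ≤ G.betaP μ P S ∧
    (¬ G.crossEdges S Sᶜ ⊆ P.E → 0 < G.betaP μ P S)

/-- `(v₀,μ)`-quasistability for a pseudo-divisor. -/
def Quasistable (v₀ : G.V) (μ : G.V → ℝ) (P : PseudoDiv G) : Prop :=
  ∀ S : Finset G.V, S ≠ Finset.univ →
    (0 ≤ G.betaP μ P S ∧ (v₀ ∈ S → 0 < G.betaP μ P S))

/-- A specialization `P ≥ Q` witnessed by the choice `a`, which assigns to each edge
`e ∈ P.E ∖ Q.E` the endpoint onto which the exceptional vertex of `e` is contracted. -/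
def SpecChoice (P Q : PseudoDiv G) (a : G.E → G.V) : Prop :=
  Q.E ⊆ P.E ∧ (∀ e, a e = G.s e ∨ a e = G.t e) ∧
    ∀ v, Q.D v = P.D v - ((P.E \ Q.E).filter fun e => a e = v).card

/-- The specialization relation on pseudo-divisors: `Spec P Q` means `P ≥ Q`. -/
def Spec (P Q : PseudoDiv G) : Prop := ∃ a, G.SpecChoice P Q a

/-- The rank `rk(𝓔,D) = |𝓔| − b₀(Γ_𝓔) + b₀(Γ)`. -/
noncomputable def rk (P : PseudoDiv G) : ℤ :=
  (P.E.card : ℤ) - G.b0 P.Eᶜ + G.b0 Finset.univ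

end Multigraph

/-- if `(𝓔₁,D₁)` specializes to `(𝓔₂,D₂)` (both of degree `d`), then for
every `V ⊆ V(Γ)` one has `β_{𝓔₁,D₁}(V) ≤ β_{𝓔₂,D₂}(V)`. -/
theorem betaP_mono_spec (G : Multigraph) (d : ℤ)
    (μ : G.V → ℝ) (hμ : ∑ v, μ v = (d : ℝ))
    (P Q : PseudoDiv G) (hPd : G.degP P = d) (hQd : G.degP Q = d)
    (hspec : G.Spec P Q) (V : Finset G.V) :
    G.betaP μ P V ≤ G.betaP μ Q V := by
  classical
  obtain ⟨a, hQP, ha, hD⟩ := hspec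
  set F := P.E \ Q.E with hF
  have hcard : ∀ (s : Finset G.E) (p : G.E → Prop) (hp : DecidablePred p),
      ((s.filter p).card : ℝ) = ∑ e ∈ s, if p e then (1:ℝ) else 0 := by
    intro s p hp
    rw [Finset.card_filter]
    push_cast
    simp
  -- valence sums as edge sums
  have hval : ∀ E' : Finset G.E, (∑ v ∈ V, (G.valE E' v : ℝ))
      = ∑ e ∈ E', ((if G.s e ∈ V then (1:ℝ) else 0) + (if G.t e ∈ V then 1 else 0)) := by
    intro E'
    have h1 : ∀ v : G.V, (G.valE E' v : ℝ)
        = ∑ e ∈ E', ((if G.s e = v then (1:ℝ) else 0) + (if G.t e = v then 1 else 0)) := by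
      intro v
      simp only [Multigraph.valE]
      push_cast
      rw [hcard E' (fun e => G.s e = v) _, hcard E' (fun e => G.t e = v) _,
        Finset.sum_add_distrib]
    simp only [h1]
    rw [Finset.sum_comm]
    refine Finset.sum_congr rfl fun e _ => ?_
    rw [Finset.sum_add_distrib]
    congr 1 <;> simp [Finset.sum_ite_eq]
  -- the contraction count as an edge sum
  have hcnt : (∑ v ∈ V, (((F.filter fun e => a e = v).card : ℤ) : ℝ))
      = ∑ e ∈ F, (if a e ∈ V then (1:ℝ) else 0) := by
    have h1 : ∀ v : G.V, (((F.filter fun e => a e = v).card : ℤ) : ℝ)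
        = ∑ e ∈ F, (if a e = v then (1:ℝ) else 0) := by
      intro v
      push_cast
      exact hcard F (fun e => a e = v) _
    simp only [h1]
    rw [Finset.sum_comm]
    refine Finset.sum_congr rfl fun e _ => ?_
    simp [Finset.sum_ite_eq]
  -- cross-edge membership criterion
  have hcrossmem : ∀ e, e ∈ G.crossEdges V Vᶜ ↔
      ((G.s e ∈ V ∧ G.t e ∉ V) ∨ (G.s e ∉ V ∧ G.t e ∈ V)) := by
    intro e
    simp only [Multigraph.crossEdges, Finset.mem_filter, Finset.mem_univ, true_and,
      Finset.mem_sdiff, Finset.mem_compl, not_not]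
    tauto
  -- splitting the cross-edge count
  have hsplit : (((G.crossEdges V Vᶜ).filter fun e => e ∉ Q.E).card : ℝ)
      = (((G.crossEdges V Vᶜ).filter fun e => e ∉ P.E).card : ℝ)
        + (((G.crossEdges V Vᶜ).filter fun e => e ∈ F).card : ℝ) := by
    have hdisj : Disjoint ((G.crossEdges V Vᶜ).filter fun e => e ∉ P.E)
        ((G.crossEdges V Vᶜ).filter fun e => e ∈ F) := by
      rw [Finset.disjoint_filter]
      intro e _ h1 h2
      exact h1 (Finset.mem_sdiff.mp h2).1
    have hcov : ((G.crossEdges V Vᶜ).filter fun e => e ∉ Q.E)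
        = ((G.crossEdges V Vᶜ).filter fun e => e ∉ P.E)
          ∪ ((G.crossEdges V Vᶜ).filter fun e => e ∈ F) := by
      rw [← Finset.filter_or]
      refine Finset.filter_congr fun e _ => ?_
      constructor
      · intro h
        by_cases hp : e ∈ P.E
        · exact Or.inr (Finset.mem_sdiff.mpr ⟨hp, h⟩)
        · exact Or.inl hp
      · rintro (h | h)
        · exact fun hq => h (hQP hq)
        · exact (Finset.mem_sdiff.mp h).2
    rw [hcov, Finset.card_union_of_disjoint hdisj]
    push_cast
    ring
  -- cross edges within F, as a sum over F
  have hFcross : (((G.crossEdges V Vᶜ).filter fun e => e ∈ F).card : ℝ)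
      = ∑ e ∈ F, (if e ∈ G.crossEdges V Vᶜ then (1:ℝ) else 0) := by
    rw [Finset.filter_mem_eq_inter, Finset.inter_comm, ← Finset.filter_mem_eq_inter]
    exact hcard F (fun e => e ∈ G.crossEdges V Vᶜ) _
  -- per-edge inequality
  have key : ∀ e ∈ F, (if a e ∈ V then (1:ℝ) else 0)
      ≤ ((if G.s e ∈ V then (1:ℝ) else 0) + (if G.t e ∈ V then 1 else 0)) / 2
        + (if e ∈ G.crossEdges V Vᶜ then (1:ℝ) else 0) / 2 := by
    intro e _
    by_cases hs : G.s e ∈ V <;> by_cases ht : G.t e ∈ V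
    · rcases ha e with h | h <;> simp [h, hs, ht] <;> positivity
    · have hc : e ∈ G.crossEdges V Vᶜ := (hcrossmem e).mpr (Or.inl ⟨hs, ht⟩)
      rcases ha e with h | h <;> simp [h, hs, ht, hc] <;> norm_num
    · have hc : e ∈ G.crossEdges V Vᶜ := (hcrossmem e).mpr (Or.inr ⟨hs, ht⟩)
      rcases ha e with h | h <;> simp [h, hs, ht, hc] <;> norm_num
    · rcases ha e with h | h <;> simp [h, hs, ht] <;> positivity
  have hsum : ∑ e ∈ F, (if a e ∈ V then (1:ℝ) else 0)
      ≤ ∑ e ∈ F, (((if G.s e ∈ V then (1:ℝ) else 0) + (if G.t e ∈ V then 1 else 0)) / 2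
        + (if e ∈ G.crossEdges V Vᶜ then (1:ℝ) else 0) / 2) := Finset.sum_le_sum key
  -- divisor sums
  have hDsum : (∑ v ∈ V, (Q.D v : ℝ))
      = (∑ v ∈ V, (P.D v : ℝ)) - ∑ v ∈ V, (((F.filter fun e => a e = v).card : ℤ) : ℝ) := by
    rw [← Finset.sum_sub_distrib]
    refine Finset.sum_congr rfl fun v _ => ?_
    rw [hD v]
    push_cast
    ring
  -- valence difference
  have hvaldiff : (∑ v ∈ V, (G.valE P.E v : ℝ))
      = (∑ v ∈ V, (G.valE Q.E v : ℝ))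
        + ∑ e ∈ F, ((if G.s e ∈ V then (1:ℝ) else 0) + (if G.t e ∈ V then 1 else 0)) := by
    rw [hval P.E, hval Q.E, ← Finset.sum_sdiff hQP, ← hF]
    ring
  -- assemble
  rw [Finset.sum_add_distrib, ← Finset.sum_div, ← Finset.sum_div] at hsum
  rw [hcnt] at hDsum
  simp only [Multigraph.betaP, Finset.sum_add_distrib, ← Finset.sum_div]
  linarith [hsplit, hFcross, hDsum, hvaldiff, hsum]
end

section
/- Let ι: Γ₁ → Γ₂ be a specialization of graphs (contraction of a subset of edges) and let (𝓔₁, D₁) be a pseudo-divisor on Γ₁ with pushforward (𝓔₂, D₂) = ι_*(𝓔₁, D₁) on Γ₂. Then for every V ⊆ V(Γ₂): β_{𝓔₂,D₂}(V) = β_{𝓔₁,D₁}(ι⁻¹(V)), where the β on Γ₂ is taken with respect to the pushforward polarization ι_*(μ). -/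
open scoped Classical

/-- A specialization of graphs `ι : Γ₁ → Γ₂`, contracting the edges in `contr`.
It consists of a surjection on vertices and an identification of `E(Γ₂)` with
`E(Γ₁) ∖ contr`, compatible with endpoints; contracted edges have their endpoints
identified. -/
structure GraphSpec (G₁ G₂ : Multigraph) where
  contr : Finset G₁.E
  ιV : G₁.V → G₂.V
  ιE : G₂.E → G₁.E
  surjV : Function.Surjective ιV
  injE : Function.Injective ιE
  rangeE : ∀ e₁ : G₁.E, (∃ e₂, ιE e₂ = e₁) ↔ e₁ ∉ contr
  comp_s : ∀ e₂, G₂.s e₂ = ιV (G₁.s (ιE e₂))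
  comp_t : ∀ e₂, G₂.t e₂ = ιV (G₁.t (ιE e₂))
  contr_ident : ∀ e ∈ contr, ιV (G₁.s e) = ιV (G₁.t e)

namespace GraphSpec

variable {G₁ G₂ : Multigraph} (σ : GraphSpec G₁ G₂)

/-- The preimage `ι⁻¹(V)` of a subset of vertices. -/
def preV (V : Finset G₂.V) : Finset G₁.V :=
  Finset.univ.filter fun v => σ.ιV v ∈ V

/-- The pushforward polarization `ι_*(μ)`. -/
noncomputable def pushMu (μ : G₁.V → ℝ) : G₂.V → ℝ := fun v' =>
  ∑ v ∈ Finset.univ.filter (fun v => σ.ιV v = v'), μ v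

/-- The pushforward `ι_*(𝓔₁, D₁)` of a pseudo-divisor: `𝓔₂ = 𝓔₁ ∩ E(Γ₂)`, and the
exceptional `−1`'s sitting over contracted edges of `𝓔₁` are absorbed into the image
vertex. -/
noncomputable def pushPD (P : PseudoDiv G₁) : PseudoDiv G₂ where
  E := Finset.univ.filter fun e₂ => σ.ιE e₂ ∈ P.E
  D := fun v' =>
    (∑ v ∈ Finset.univ.filter (fun v => σ.ιV v = v'), P.D v)
      - ((σ.contr ∩ P.E).filter fun e => σ.ιV (G₁.s e) = v').card

end GraphSpec


section Aux

variable {G₁ G₂ : Multigraph} (σ : GraphSpec G₁ G₂)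

/-- Summing fiber cardinalities over a target set. -/
lemma fiber_card {α κ : Type} [DecidableEq κ] (s : Finset α) (t : Finset κ) (g : α → κ) :
    (∑ k ∈ t, (s.filter fun a => g a = k).card) = (s.filter fun a => g a ∈ t).card := by
  classical
  simp only [Finset.card_eq_sum_ones]
  exact Finset.sum_fiberwise_eq_sum_filter s t g (fun _ => 1)

/-- Transport a counting problem on `E(Γ₂)` to non-contracted edges of `Γ₁`. -/
lemma card_filter_iE (q : G₁.E → Prop) [DecidablePred q] :
    (Finset.univ.filter fun e₂ => q (σ.ιE e₂)).card
      = (Finset.univ.filter fun e₁ => e₁ ∉ σ.contr ∧ q e₁).card := by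
  classical
  refine Finset.card_bij (fun e₂ _ => σ.ιE e₂) ?_ ?_ ?_
  · intro e₂ he₂
    simp only [Finset.mem_filter, Finset.mem_univ, true_and] at he₂ ⊢
    exact ⟨(σ.rangeE (σ.ιE e₂)).mp ⟨e₂, rfl⟩, he₂⟩
  · intro a₁ _ a₂ _ h
    exact σ.injE h
  · intro e₁ he₁
    simp only [Finset.mem_filter, Finset.mem_univ, true_and] at he₁
    obtain ⟨e₂, he₂⟩ := (σ.rangeE e₁).mpr he₁.1
    exact ⟨e₂, by simp [he₂, he₁.2], he₂⟩

/-- Splitting a count over `P.E` by membership in `contr`. -/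
lemma split_card (P : PseudoDiv G₁) (cond : G₁.E → Prop) [DecidablePred cond] :
    (P.E.filter fun e => cond e).card
      = (Finset.univ.filter fun e => e ∉ σ.contr ∧ e ∈ P.E ∧ cond e).card
        + ((σ.contr ∩ P.E).filter fun e => cond e).card := by
  classical
  rw [← Finset.card_union_of_disjoint]
  · congr 1
    ext e
    simp only [Finset.mem_union, Finset.mem_filter, Finset.mem_univ, true_and,
      Finset.mem_inter]
    tauto
  · rw [Finset.disjoint_left]
    intro e he he'
    simp only [Finset.mem_filter, Finset.mem_univ, true_and, Finset.mem_inter] at he he'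
    exact he.1 he'.1.1

end Aux

/-- for a specialization of graphs `ι : Γ₁ → Γ₂` and a pseudo-divisor
`(𝓔₁,D₁)` on `Γ₁` with pushforward `(𝓔₂,D₂)`, one has
`β_{𝓔₂,D₂}(V) = β_{𝓔₁,D₁}(ι⁻¹(V))` for every `V ⊆ V(Γ₂)`, where `β` on `Γ₂` is taken
with respect to `ι_*(μ)`. -/
theorem betaP_push (G₁ G₂ : Multigraph) (σ : GraphSpec G₁ G₂)
    (μ : G₁.V → ℝ) (P : PseudoDiv G₁) (V : Finset G₂.V) :
    G₂.betaP (σ.pushMu μ) (σ.pushPD P) V = G₁.betaP μ P (σ.preV V) := by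
  classical
  set S := σ.preV V with hSdef
  have hmemS : ∀ v : G₁.V, v ∈ S ↔ σ.ιV v ∈ V := by
    intro v; simp [hSdef, GraphSpec.preV]
  set c : ℕ := ((σ.contr ∩ P.E).filter fun e => σ.ιV (G₁.s e) ∈ V).card with hc
  -- μ part
  have hμ : ∑ v' ∈ V, σ.pushMu μ v' = ∑ v ∈ S, μ v := by
    rw [hSdef]
    simpa [GraphSpec.pushMu, GraphSpec.preV] using
      Finset.sum_fiberwise_eq_sum_filter Finset.univ V σ.ιV μ
  -- D part
  have hD : ∑ v' ∈ V, (((σ.pushPD P).D v' : ℝ)) = (∑ v ∈ S, (P.D v : ℝ)) - c := by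
    have h1 : ∑ v' ∈ V, ∑ v ∈ Finset.univ.filter (fun v => σ.ιV v = v'), (P.D v : ℝ)
        = ∑ v ∈ S, (P.D v : ℝ) := by
      rw [hSdef]
      simpa [GraphSpec.preV] using
        Finset.sum_fiberwise_eq_sum_filter Finset.univ V σ.ιV (fun v => (P.D v : ℝ))
    have h2 : ∑ v' ∈ V,
        (((σ.contr ∩ P.E).filter fun e => σ.ιV (G₁.s e) = v').card : ℝ) = (c : ℝ) := by
      rw [hc]
      norm_cast
      exact fiber_card (σ.contr ∩ P.E) V (fun e => σ.ιV (G₁.s e))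
    calc ∑ v' ∈ V, (((σ.pushPD P).D v' : ℝ))
        = ∑ v' ∈ V, ((∑ v ∈ Finset.univ.filter (fun v => σ.ιV v = v'), (P.D v : ℝ))
            - (((σ.contr ∩ P.E).filter fun e => σ.ιV (G₁.s e) = v').card : ℝ)) := by
          apply Finset.sum_congr rfl; intro v' _
          simp [GraphSpec.pushPD]
      _ = _ := by rw [Finset.sum_sub_distrib, h1, h2]
  -- the two correction counts (source / target versions) agree
  have hct : ((σ.contr ∩ P.E).filter fun e => σ.ιV (G₁.t e) ∈ V).card = c := by
    rw [hc]
    congr 1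
    apply Finset.filter_congr
    intro e he
    rw [Finset.mem_inter] at he
    rw [σ.contr_ident e he.1]
  -- valence part
  have hval : ∑ v ∈ S, G₁.valE P.E v
      = (∑ v' ∈ V, G₂.valE (σ.pushPD P).E v') + 2 * c := by
    -- sum over S of valences in Γ₁
    have hA : ∀ f : G₁.E → G₁.V,
        ∑ v ∈ S, (P.E.filter fun e => f e = v).card
          = (P.E.filter fun e => σ.ιV (f e) ∈ V).card := by
      intro f
      rw [fiber_card P.E S f]
      congr 1
      apply Finset.filter_congr
      intro e _
      simp [hmemS]
    -- sum over V of valences in Γ₂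
    have hB : ∀ (f₂ : G₂.E → G₂.V) (f₁ : G₁.E → G₁.V),
        (∀ e₂, f₂ e₂ = σ.ιV (f₁ (σ.ιE e₂))) →
        ∑ v' ∈ V, ((σ.pushPD P).E.filter fun e => f₂ e = v').card
          = (Finset.univ.filter fun e => e ∉ σ.contr ∧ e ∈ P.E ∧ σ.ιV (f₁ e) ∈ V).card := by
      intro f₂ f₁ hf
      rw [fiber_card (σ.pushPD P).E V f₂]
      have : (σ.pushPD P).E.filter (fun e => f₂ e ∈ V)
          = Finset.univ.filter fun e₂ =>
              (fun e₁ => e₁ ∈ P.E ∧ σ.ιV (f₁ e₁) ∈ V) (σ.ιE e₂) := by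
        ext e₂
        simp [GraphSpec.pushPD, hf e₂, Finset.mem_filter, and_assoc]
      rw [this, card_filter_iE σ (fun e₁ => e₁ ∈ P.E ∧ σ.ιV (f₁ e₁) ∈ V)]
    have hs := split_card σ P (fun e => σ.ιV (G₁.s e) ∈ V)
    have ht := split_card σ P (fun e => σ.ιV (G₁.t e) ∈ V)
    simp only [Multigraph.valE, Finset.sum_add_distrib]
    rw [hA G₁.s, hA G₁.t, hB G₂.s G₁.s σ.comp_s, hB G₂.t G₁.t σ.comp_t, hs, ht, hct, ← hc]
    ring
  -- cross-edge part
  have hcross : ((G₂.crossEdges V Vᶜ).filter fun e => e ∉ (σ.pushPD P).E).card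
      = ((G₁.crossEdges S Sᶜ).filter fun e => e ∉ P.E).card := by
    have hL : (G₂.crossEdges V Vᶜ).filter (fun e => e ∉ (σ.pushPD P).E)
        = Finset.univ.filter fun e₂ =>
            (fun e₁ => ((σ.ιV (G₁.s e₁) ∈ V ∧ σ.ιV (G₁.t e₁) ∉ V) ∨
              (σ.ιV (G₁.s e₁) ∉ V ∧ σ.ιV (G₁.t e₁) ∈ V)) ∧ e₁ ∉ P.E) (σ.ιE e₂) := by
      ext e₂
      simp [Multigraph.crossEdges, GraphSpec.pushPD, σ.comp_s e₂, σ.comp_t e₂,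
        Finset.mem_filter, and_assoc]
    have hR : (G₁.crossEdges S Sᶜ).filter (fun e => e ∉ P.E)
        = Finset.univ.filter fun e₁ => e₁ ∉ σ.contr ∧
            ((σ.ιV (G₁.s e₁) ∈ V ∧ σ.ιV (G₁.t e₁) ∉ V) ∨
              (σ.ιV (G₁.s e₁) ∉ V ∧ σ.ιV (G₁.t e₁) ∈ V)) ∧ e₁ ∉ P.E := by
      ext e₁
      simp only [Multigraph.crossEdges, Finset.mem_filter, Finset.mem_univ, true_and,
        Finset.mem_sdiff, Finset.mem_compl, hmemS, not_not, and_self]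
      constructor
      · rintro ⟨hcr, hne⟩
        refine ⟨?_, hcr, hne⟩
        intro hmem
        have h := σ.contr_ident e₁ hmem
        rcases hcr with ⟨h1, h2⟩ | ⟨h1, h2⟩
        · exact h2 (h ▸ h1)
        · exact (h ▸ h1) h2
      · tauto
    rw [hL, hR]
    exact card_filter_iE σ (fun e₁ => ((σ.ιV (G₁.s e₁) ∈ V ∧ σ.ιV (G₁.t e₁) ∉ V) ∨
      (σ.ιV (G₁.s e₁) ∉ V ∧ σ.ιV (G₁.t e₁) ∈ V)) ∧ e₁ ∉ P.E)
  -- put everything together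
  simp only [Multigraph.betaP, Finset.sum_add_distrib, ← Finset.sum_div]
  rw [hμ, hD, hcross]
  have h2 : (∑ v ∈ S, (G₁.valE P.E v : ℝ))
      = (∑ v' ∈ V, (G₂.valE (σ.pushPD P).E v' : ℝ)) + 2 * c := by
    exact_mod_cast congrArg (Nat.cast : ℕ → ℝ) hval
  have hv : (∑ v' ∈ V, (G₂.valE (σ.pushPD P).E v' : ℝ))
      = (∑ v ∈ S, (G₁.valE P.E v : ℝ)) - 2 * c := by linarith
  rw [hv]
  ring
end

section
/- Let Γ be a graph, μ a degree-d polarization, and (𝓔, D) a μ-semistable pseudo-divisor on Γ. Suppose V ⊆ V(Γ) satisfies β_{𝓔,D}(V) = 0 and E(V,V^c) ⊄ 𝓔. Then there exists a unique μ-semistable pseudo-divisor (𝓔 ∪ E(V,V^c), D₁) on Γ that strictly specializes to (𝓔, D). Explicitly (in the case 𝓔 = ∅), D₁(v) = D(v) + val_{E(V,V^c)}(v) for v ∈ V, D₁(v) = D(v) for v ∉ V, and D₁ = −1 on exceptional vertices. -/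
open scoped Classical

namespace Multigraph

variable (G : Multigraph)

lemma mem_crossEdges_compl (T : Finset G.V) (e : G.E) :
    e ∈ G.crossEdges T Tᶜ ↔ ((G.s e ∈ T ∧ G.t e ∉ T) ∨ (G.s e ∉ T ∧ G.t e ∈ T)) := by
  simp only [crossEdges, Finset.mem_filter, Finset.mem_univ, true_and,
    Finset.mem_sdiff, Finset.mem_compl, not_not]
  tauto

lemma sum_card_fiber (X : Finset G.E) (f : G.E → G.V) (T : Finset G.V) :
    ∑ v ∈ T, (X.filter fun e => f e = v).card = (X.filter fun e => f e ∈ T).card := by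
  simp_rw [Finset.card_filter]
  rw [Finset.sum_comm]
  refine Finset.sum_congr rfl fun e _ => ?_
  rw [Finset.sum_ite_eq]

lemma sum_valE (X : Finset G.E) (T : Finset G.V) :
    ∑ v ∈ T, G.valE X v
      = (X.filter fun e => G.s e ∈ T).card + (X.filter fun e => G.t e ∈ T).card := by
  unfold valE
  rw [Finset.sum_add_distrib, sum_card_fiber, sum_card_fiber]

lemma betaP_eq (μ : G.V → ℝ) (P : PseudoDiv G) (T : Finset G.V) :
    G.betaP μ P T = (∑ v ∈ T, (P.D v : ℝ)) - (∑ v ∈ T, μ v)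
      - ((∑ v ∈ T, G.valE P.E v : ℕ) : ℝ) / 2
      + ((G.crossEdges T Tᶜ).filter fun e => e ∉ P.E).card / 2 := by
  unfold betaP
  rw [Finset.sum_add_distrib, ← Finset.sum_div, ← Nat.cast_sum]
  ring

/-- Lemma A: how `β` changes under blowing up the cross edges, for any choice `a'`. -/
lemma betaP_spec (μ : G.V → ℝ) (P : PseudoDiv G) (S : Finset G.V)
    (a' : G.E → G.V) (hend : ∀ e, a' e = G.s e ∨ a' e = G.t e)
    (Q : PseudoDiv G) (hQE : Q.E = P.E ∪ G.crossEdges S Sᶜ)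
    (hQD : ∀ v, Q.D v
      = P.D v + (((G.crossEdges S Sᶜ \ P.E).filter fun e => a' e = v).card : ℤ))
    (T : Finset G.V) :
    G.betaP μ Q T = G.betaP μ P T
      - (((G.crossEdges S Sᶜ \ P.E).filter
          fun e => a' e ∉ T ∧ (G.s e ∈ T ∨ G.t e ∈ T)).card : ℝ) := by
  set X := G.crossEdges S Sᶜ \ P.E with hX
  have hQE' : Q.E = P.E ∪ X := by
    rw [hQE, hX, Finset.union_sdiff_self_eq_union]
  have hdisj : Disjoint P.E X := Finset.disjoint_sdiff
  have h1Z : ∑ v ∈ T, Q.D v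
      = ∑ v ∈ T, P.D v + ((X.filter fun e => a' e ∈ T).card : ℤ) := by
    calc ∑ v ∈ T, Q.D v
        = ∑ v ∈ T, (P.D v + ((X.filter fun e => a' e = v).card : ℤ)) :=
          Finset.sum_congr rfl fun v _ => hQD v
      _ = ∑ v ∈ T, P.D v + ∑ v ∈ T, ((X.filter fun e => a' e = v).card : ℤ) :=
          Finset.sum_add_distrib
      _ = _ := by rw [← Nat.cast_sum, G.sum_card_fiber]
  have h2 : ∑ v ∈ T, G.valE Q.E v
      = ∑ v ∈ T, G.valE P.E v
        + ((X.filter fun e => G.s e ∈ T).card + (X.filter fun e => G.t e ∈ T).card) := by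
    have hval : ∀ v, G.valE Q.E v = G.valE P.E v + G.valE X v := by
      intro v
      rw [hQE']
      unfold valE
      rw [Finset.filter_union, Finset.filter_union,
        Finset.card_union_of_disjoint (Finset.disjoint_filter_filter hdisj),
        Finset.card_union_of_disjoint (Finset.disjoint_filter_filter hdisj)]
      ring
    calc ∑ v ∈ T, G.valE Q.E v
        = ∑ v ∈ T, (G.valE P.E v + G.valE X v) := Finset.sum_congr rfl fun v _ => hval v
      _ = ∑ v ∈ T, G.valE P.E v + ∑ v ∈ T, G.valE X v := Finset.sum_add_distrib
      _ = _ := by rw [G.sum_valE X]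
  have h3 : ((G.crossEdges T Tᶜ).filter fun e => e ∉ Q.E).card
      + (X.filter fun e => e ∈ G.crossEdges T Tᶜ).card
      = ((G.crossEdges T Tᶜ).filter fun e => e ∉ P.E).card := by
    have hd : Disjoint ((G.crossEdges T Tᶜ).filter fun e => e ∉ Q.E)
        (X.filter fun e => e ∈ G.crossEdges T Tᶜ) := by
      rw [Finset.disjoint_left]
      intro e he1 he2
      rw [Finset.mem_filter] at he1 he2
      exact he1.2 (hQE' ▸ Finset.mem_union_right _ he2.1)
    rw [← Finset.card_union_of_disjoint hd]
    congr 1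
    ext e
    simp only [Finset.mem_union, Finset.mem_filter, hQE', Finset.mem_union, hX,
      Finset.mem_sdiff]
    tauto
  have h4 : (X.filter fun e => a' e ∈ T).card * 2
      + (X.filter fun e => a' e ∉ T ∧ (G.s e ∈ T ∨ G.t e ∈ T)).card * 2
      = (X.filter fun e => G.s e ∈ T).card + (X.filter fun e => G.t e ∈ T).card
        + (X.filter fun e => e ∈ G.crossEdges T Tᶜ).card := by
    simp_rw [Finset.card_filter]
    rw [Finset.sum_mul, Finset.sum_mul, ← Finset.sum_add_distrib,
      ← Finset.sum_add_distrib, ← Finset.sum_add_distrib]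
    refine Finset.sum_congr rfl fun e _ => ?_
    simp only [G.mem_crossEdges_compl]
    rcases hend e with h | h <;> rw [h] <;>
      by_cases h1 : G.s e ∈ T <;> by_cases h2 : G.t e ∈ T <;> simp [h1, h2]
  rw [G.betaP_eq, G.betaP_eq]
  have r1 : (∑ v ∈ T, (Q.D v : ℝ))
      = (∑ v ∈ T, (P.D v : ℝ)) + ((X.filter fun e => a' e ∈ T).card : ℝ) := by
    exact_mod_cast h1Z
  have r2 : ((∑ v ∈ T, G.valE Q.E v : ℕ) : ℝ)
      = ((∑ v ∈ T, G.valE P.E v : ℕ) : ℝ)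
        + (((X.filter fun e => G.s e ∈ T).card : ℝ)
        + ((X.filter fun e => G.t e ∈ T).card : ℝ)) := by
    exact_mod_cast h2
  have r3 : (((G.crossEdges T Tᶜ).filter fun e => e ∉ Q.E).card : ℝ)
      + ((X.filter fun e => e ∈ G.crossEdges T Tᶜ).card : ℝ)
      = (((G.crossEdges T Tᶜ).filter fun e => e ∉ P.E).card : ℝ) := by
    exact_mod_cast h3
  have r4 : ((X.filter fun e => a' e ∈ T).card : ℝ) * 2
      + ((X.filter fun e => a' e ∉ T ∧ (G.s e ∈ T ∨ G.t e ∈ T)).card : ℝ) * 2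
      = ((X.filter fun e => G.s e ∈ T).card : ℝ)
        + ((X.filter fun e => G.t e ∈ T).card : ℝ)
        + ((X.filter fun e => e ∈ G.crossEdges T Tᶜ).card : ℝ) := by
    exact_mod_cast h4
  linarith

/-- Lemma B: submodularity identity for `β`. -/
lemma betaP_submod (μ : G.V → ℝ) (P : PseudoDiv G) (A B : Finset G.V) :
    G.betaP μ P A + G.betaP μ P B = G.betaP μ P (A ∩ B) + G.betaP μ P (A ∪ B)
      + ((Finset.univ.filter fun e => e ∉ P.E ∧
          ((G.s e ∈ A ∧ G.s e ∉ B ∧ G.t e ∈ B ∧ G.t e ∉ A) ∨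
           (G.s e ∈ B ∧ G.s e ∉ A ∧ G.t e ∈ A ∧ G.t e ∉ B))).card : ℝ) := by
  have key : ∀ X : Finset G.V, (G.crossEdges X Xᶜ).filter (fun e => e ∉ P.E)
      = Finset.univ.filter
        (fun e => e ∉ P.E ∧ ((G.s e ∈ X ∧ G.t e ∉ X) ∨ (G.s e ∉ X ∧ G.t e ∈ X))) := by
    intro X
    ext e
    simp only [Finset.mem_filter, Finset.mem_univ, true_and, G.mem_crossEdges_compl]
    tauto
  have hcut : ((G.crossEdges A Aᶜ).filter fun e => e ∉ P.E).card
      + ((G.crossEdges B Bᶜ).filter fun e => e ∉ P.E).card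
      = ((G.crossEdges (A ∩ B) (A ∩ B)ᶜ).filter fun e => e ∉ P.E).card
        + ((G.crossEdges (A ∪ B) (A ∪ B)ᶜ).filter fun e => e ∉ P.E).card
        + 2 * (Finset.univ.filter fun e => e ∉ P.E ∧
            ((G.s e ∈ A ∧ G.s e ∉ B ∧ G.t e ∈ B ∧ G.t e ∉ A) ∨
             (G.s e ∈ B ∧ G.s e ∉ A ∧ G.t e ∈ A ∧ G.t e ∉ B))).card := by
    rw [key A, key B, key (A ∩ B), key (A ∪ B)]
    simp_rw [Finset.card_filter]
    rw [Finset.mul_sum, ← Finset.sum_add_distrib, ← Finset.sum_add_distrib,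
      ← Finset.sum_add_distrib]
    refine Finset.sum_congr rfl fun e _ => ?_
    by_cases hE : e ∈ P.E
    · simp [hE]
    · by_cases h1 : G.s e ∈ A <;> by_cases h2 : G.s e ∈ B <;>
        by_cases h3 : G.t e ∈ A <;> by_cases h4 : G.t e ∈ B <;>
        simp [hE, h1, h2, h3, h4, Finset.mem_inter, Finset.mem_union]
  have hD := Finset.sum_union_inter (s₁ := A) (s₂ := B) (f := fun v => (P.D v : ℝ))
  have hm := Finset.sum_union_inter (s₁ := A) (s₂ := B) (f := μ)
  have hv := Finset.sum_union_inter (s₁ := A) (s₂ := B) (f := fun v => G.valE P.E v)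
  rw [G.betaP_eq, G.betaP_eq, G.betaP_eq, G.betaP_eq]
  have rv : ((∑ v ∈ A ∪ B, G.valE P.E v : ℕ) : ℝ) + ((∑ v ∈ A ∩ B, G.valE P.E v : ℕ) : ℝ)
      = ((∑ v ∈ A, G.valE P.E v : ℕ) : ℝ) + ((∑ v ∈ B, G.valE P.E v : ℕ) : ℝ) := by
    exact_mod_cast hv
  have rc : (((G.crossEdges A Aᶜ).filter fun e => e ∉ P.E).card : ℝ)
      + (((G.crossEdges B Bᶜ).filter fun e => e ∉ P.E).card : ℝ)
      = (((G.crossEdges (A ∩ B) (A ∩ B)ᶜ).filter fun e => e ∉ P.E).card : ℝ)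
        + (((G.crossEdges (A ∪ B) (A ∪ B)ᶜ).filter fun e => e ∉ P.E).card : ℝ)
        + 2 * ((Finset.univ.filter fun e => e ∉ P.E ∧
            ((G.s e ∈ A ∧ G.s e ∉ B ∧ G.t e ∈ B ∧ G.t e ∉ A) ∨
             (G.s e ∈ B ∧ G.s e ∉ A ∧ G.t e ∈ A ∧ G.t e ∉ B))).card : ℝ) := by
    exact_mod_cast hcut
  linarith

/-- Lemma C: with the canonical choice the bad set is the submodularity defect. -/
lemma badset_eq (P : PseudoDiv G) (S T : Finset G.V) :
    ((G.crossEdges S Sᶜ \ P.E).filter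
        fun e => (if G.s e ∈ S then G.s e else G.t e) ∉ T ∧ (G.s e ∈ T ∨ G.t e ∈ T))
      = Finset.univ.filter (fun e => e ∉ P.E ∧
          ((G.s e ∈ T ∧ G.s e ∉ S ∧ G.t e ∈ S ∧ G.t e ∉ T) ∨
           (G.s e ∈ S ∧ G.s e ∉ T ∧ G.t e ∈ T ∧ G.t e ∉ S))) := by
  ext e
  simp only [Finset.mem_filter, Finset.mem_sdiff, Finset.mem_univ, true_and,
    G.mem_crossEdges_compl]
  by_cases hs : G.s e ∈ S <;> simp only [hs, if_true, if_false, ite_true, ite_false] <;> tauto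

lemma aS_mem (S : Finset G.V) :
    ∀ e ∈ G.crossEdges S Sᶜ, (if G.s e ∈ S then G.s e else G.t e) ∈ S := by
  intro e he
  rw [G.mem_crossEdges_compl] at he
  by_cases hs : G.s e ∈ S <;> simp only [hs, if_true, if_false] <;> tauto

lemma aS_end (S : Finset G.V) :
    ∀ e : G.E, (if G.s e ∈ S then G.s e else G.t e) = G.s e ∨
      (if G.s e ∈ S then G.s e else G.t e) = G.t e := by
  intro e
  by_cases hs : G.s e ∈ S <;> simp [hs]

/-- The canonical divisor after blow-up is semistable. -/
lemma canonical_semistable (μ : G.V → ℝ) (P : PseudoDiv G)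
    (hP : G.Semistable μ P) (S : Finset G.V) (h0 : G.betaP μ P S = 0)
    (Q : PseudoDiv G) (hQE : Q.E = P.E ∪ G.crossEdges S Sᶜ)
    (hQD : ∀ v, Q.D v = P.D v + (((G.crossEdges S Sᶜ \ P.E).filter
      fun e => (if G.s e ∈ S then G.s e else G.t e) = v).card : ℤ)) :
    G.Semistable μ Q := by
  intro T
  rw [G.betaP_spec μ P S _ (G.aS_end S) Q hQE hQD T]
  have hsub := G.betaP_submod μ P T S
  rw [← G.badset_eq P S T] at hsub
  have h1 := hP (T ∩ S)
  have h2 := hP (T ∪ S)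
  rw [h0] at hsub
  linarith

/-- In a semistable blow-up, the choice `a'` necessarily points into `S`. -/
lemma forced_choice (μ : G.V → ℝ) (P : PseudoDiv G) (S : Finset G.V)
    (h0 : G.betaP μ P S = 0)
    (a' : G.E → G.V) (hend : ∀ e, a' e = G.s e ∨ a' e = G.t e)
    (Q : PseudoDiv G) (hQE : Q.E = P.E ∪ G.crossEdges S Sᶜ)
    (hQD : ∀ v, Q.D v = P.D v + (((G.crossEdges S Sᶜ \ P.E).filter
      fun e => a' e = v).card : ℤ))
    (hQss : G.Semistable μ Q) :
    ∀ e ∈ G.crossEdges S Sᶜ \ P.E, a' e = (if G.s e ∈ S then G.s e else G.t e) := by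
  have hb := G.betaP_spec μ P S a' hend Q hQE hQD S
  have hcard0 : ((G.crossEdges S Sᶜ \ P.E).filter
      fun e => a' e ∉ S ∧ (G.s e ∈ S ∨ G.t e ∈ S)).card = 0 := by
    have h1 := hQss S
    rw [hb, h0] at h1
    have h2 : (((G.crossEdges S Sᶜ \ P.E).filter
        fun e => a' e ∉ S ∧ (G.s e ∈ S ∨ G.t e ∈ S)).card : ℝ) ≤ 0 := by linarith
    exact_mod_cast le_antisymm h2 (Nat.cast_nonneg _)
  have hempty := Finset.card_eq_zero.mp hcard0
  intro e he
  have hnotbad : ¬ (a' e ∉ S ∧ (G.s e ∈ S ∨ G.t e ∈ S)) := by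
    intro hbad
    have hmem : e ∈ (G.crossEdges S Sᶜ \ P.E).filter
        (fun e => a' e ∉ S ∧ (G.s e ∈ S ∨ G.t e ∈ S)) := Finset.mem_filter.2 ⟨he, hbad⟩
    rw [hempty] at hmem
    exact absurd hmem (Finset.notMem_empty e)
  have heC := (Finset.mem_sdiff.1 he).1
  rw [G.mem_crossEdges_compl] at heC
  have haS : a' e ∈ S := by
    by_contra hn
    exact hnotbad ⟨hn, by tauto⟩
  rcases hend e with h | h
  · rcases heC with ⟨h1, h2⟩ | ⟨h1, h2⟩
    · rw [h, if_pos h1]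
    · exact absurd (h ▸ haS) h1
  · rcases heC with ⟨h1, h2⟩ | ⟨h1, h2⟩
    · exact absurd (h ▸ haS) h2
    · rw [h, if_neg h1]

/-- The canonical count equals the valence (on `S`; zero off `S`). -/
lemma card_aS_eq_valE (S : Finset G.V) (v : G.V) :
    (((G.crossEdges S Sᶜ).filter
        fun e => (if G.s e ∈ S then G.s e else G.t e) = v).card : ℤ)
      = if v ∈ S then (G.valE (G.crossEdges S Sᶜ) v : ℤ) else 0 := by
  by_cases hv : v ∈ S
  · rw [if_pos hv]
    have h1 : (G.crossEdges S Sᶜ).filter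
          (fun e => (if G.s e ∈ S then G.s e else G.t e) = v)
        = (G.crossEdges S Sᶜ).filter (fun e => G.s e = v ∨ G.t e = v) := by
      apply Finset.filter_congr
      intro e he
      rw [G.mem_crossEdges_compl] at he
      rcases he with ⟨h1, h2⟩ | ⟨h1, h2⟩
      · rw [if_pos h1]
        constructor
        · exact fun h => Or.inl h
        · rintro (h | h)
          · exact h
          · exact absurd (by rw [h]; exact hv) h2
      · rw [if_neg h1]
        constructor
        · exact fun h => Or.inr h
        · rintro (h | h)
          · exact absurd (by rw [h]; exact hv) h1
          · exact h
    have hdisj : Disjoint ((G.crossEdges S Sᶜ).filter fun e => G.s e = v)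
        ((G.crossEdges S Sᶜ).filter fun e => G.t e = v) := by
      rw [Finset.disjoint_left]
      intro e he1 he2
      rw [Finset.mem_filter] at he1 he2
      have hC := he1.1
      rw [G.mem_crossEdges_compl] at hC
      rcases hC with ⟨a1, a2⟩ | ⟨a1, a2⟩
      · exact a2 (by rw [he2.2]; exact hv)
      · exact a1 (by rw [he1.2]; exact hv)
    rw [h1, Finset.filter_or, Finset.card_union_of_disjoint hdisj]
    simp [valE]
  · rw [if_neg hv]
    have hempty : (G.crossEdges S Sᶜ).filter
        (fun e => (if G.s e ∈ S then G.s e else G.t e) = v) = ∅ := by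
      rw [Finset.filter_eq_empty_iff]
      intro e he h
      exact hv (h ▸ G.aS_mem S e he)
    simp [hempty]

end Multigraph

/-- if `(𝓔,D)` is `μ`-semistable, `β_{𝓔,D}(S) = 0` and `E(S,Sᶜ) ⊄ 𝓔`,
then there is a unique `μ`-semistable pseudo-divisor with edge set `𝓔 ∪ E(S,Sᶜ)`
strictly specializing to `(𝓔,D)`; moreover when `𝓔 = ∅` it is given by the explicit
formula `D₁ = D + val_{E(S,Sᶜ)}` on `S` and `D₁ = D` off `S`. -/
theorem exists_unique_semistable_cut (G : Multigraph) (d : ℤ)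
    (μ : G.V → ℝ) (hμ : ∑ v, μ v = (d : ℝ))
    (P : PseudoDiv G) (hP : G.Semistable μ P)
    (S : Finset G.V) (h0 : G.betaP μ P S = 0)
    (hcut : ¬ G.crossEdges S Sᶜ ⊆ P.E) :
    (∃! Q : PseudoDiv G, Q.E = P.E ∪ G.crossEdges S Sᶜ ∧ G.Semistable μ Q ∧
        G.Spec Q P ∧ Q ≠ P) ∧
      (P.E = ∅ → ∀ Q : PseudoDiv G, Q.E = P.E ∪ G.crossEdges S Sᶜ →
        G.Semistable μ Q → G.Spec Q P → Q ≠ P →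
        ∀ v, Q.D v = P.D v + (if v ∈ S then (G.valE (G.crossEdges S Sᶜ) v : ℤ) else 0)) := by
  classical
  set Q0 : PseudoDiv G :=
    ⟨P.E ∪ G.crossEdges S Sᶜ, fun v => P.D v + (((G.crossEdges S Sᶜ \ P.E).filter
      fun e => (if G.s e ∈ S then G.s e else G.t e) = v).card : ℤ)⟩ with hQ0
  have hQ0E : Q0.E = P.E ∪ G.crossEdges S Sᶜ := rfl
  have hQ0D : ∀ v, Q0.D v = P.D v + (((G.crossEdges S Sᶜ \ P.E).filter
      fun e => (if G.s e ∈ S then G.s e else G.t e) = v).card : ℤ) := fun v => rfl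
  have hsdiffQ0 : Q0.E \ P.E = G.crossEdges S Sᶜ \ P.E := by
    rw [hQ0E, Finset.union_sdiff_left]
  have hss : G.Semistable μ Q0 := G.canonical_semistable μ P hP S h0 Q0 hQ0E hQ0D
  have hspec : G.Spec Q0 P := by
    refine ⟨fun e => if G.s e ∈ S then G.s e else G.t e,
      Finset.subset_union_left, G.aS_end S, fun v => ?_⟩
    rw [hsdiffQ0, hQ0D v]
    ring
  have hne : Q0 ≠ P := by
    intro h
    apply hcut
    have hEeq : P.E ∪ G.crossEdges S Sᶜ = P.E := by rw [← hQ0E, h]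
    exact Finset.union_eq_left.mp hEeq
  constructor
  · refine ⟨Q0, ⟨hQ0E, hss, hspec, hne⟩, ?_⟩
    rintro Q' ⟨hQ'E, hQ'ss, ⟨a', hsub', hend', hD'⟩, -⟩
    have hsdiff' : Q'.E \ P.E = G.crossEdges S Sᶜ \ P.E := by
      rw [hQ'E, Finset.union_sdiff_left]
    have hQ'D : ∀ v, Q'.D v = P.D v + (((G.crossEdges S Sᶜ \ P.E).filter
        fun e => a' e = v).card : ℤ) := by
      intro v
      have h := hD' v
      rw [hsdiff'] at h
      omega
    have hforced := G.forced_choice μ P S h0 a' hend' Q' hQ'E hQ'D hQ'ss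
    have hDeq : ∀ v, Q'.D v = Q0.D v := by
      intro v
      rw [hQ'D v, hQ0D v]
      have hfe : ((G.crossEdges S Sᶜ \ P.E).filter fun e => a' e = v)
          = ((G.crossEdges S Sᶜ \ P.E).filter
              fun e => (if G.s e ∈ S then G.s e else G.t e) = v) :=
        Finset.filter_congr fun e he => by rw [hforced e he]
      rw [hfe]
    have hE : Q'.E = Q0.E := by rw [hQ'E, hQ0E]
    have hD : Q'.D = Q0.D := funext hDeq
    calc Q' = ⟨Q'.E, Q'.D⟩ := rfl
      _ = ⟨Q0.E, Q0.D⟩ := by rw [hE, hD]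
      _ = Q0 := rfl
  · rintro hE0 Q' hQ'E hQ'ss ⟨a', hsub', hend', hD'⟩ - v
    have hsdiff' : Q'.E \ P.E = G.crossEdges S Sᶜ \ P.E := by
      rw [hQ'E, Finset.union_sdiff_left]
    have hQ'D : ∀ v, Q'.D v = P.D v + (((G.crossEdges S Sᶜ \ P.E).filter
        fun e => a' e = v).card : ℤ) := by
      intro v
      have h := hD' v
      rw [hsdiff'] at h
      omega
    have hforced := G.forced_choice μ P S h0 a' hend' Q' hQ'E hQ'D hQ'ss
    rw [hQ'D v]
    have hfe : ((G.crossEdges S Sᶜ \ P.E).filter fun e => a' e = v)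
        = ((G.crossEdges S Sᶜ).filter
            fun e => (if G.s e ∈ S then G.s e else G.t e) = v) := by
      rw [hE0, Finset.sdiff_empty]
      refine Finset.filter_congr fun e he => ?_
      rw [hforced e (by rw [hE0, Finset.sdiff_empty]; exact he)]
    rw [hfe, G.card_aS_eq_valE S v]
end

section
/- Let Γ be a graph and let (𝓔₁, D₁), (𝓔₂, D₂) be pseudo-divisors on Γ with (𝓔₁, D₁) ≥ (𝓔₂, D₂). For each subset 𝓔 with 𝓔₂ ⊆ 𝓔 ⊆ 𝓔₁, there exists a unique pseudo-divisor (𝓔, D) with (𝓔₁, D₁) ≥ (𝓔, D) ≥ (𝓔₂, D₂). Moreover, if (𝓔₁, D₁) is μ-semistable for a polarization μ on Γ, then (𝓔, D) is μ-semistable. -/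
open scoped Classical

namespace Multigraph

variable {G : Multigraph}

lemma sum_card_filter_eq (F : Finset G.E) (S : Finset G.V) (f : G.E → G.V) :
    ∑ v ∈ S, (F.filter fun e => f e = v).card = (F.filter fun e => f e ∈ S).card := by
  simp only [Finset.card_filter]
  rw [Finset.sum_comm]
  refine Finset.sum_congr rfl fun e _ => ?_
  exact Finset.sum_ite_eq S (f e) (fun _ => 1)

lemma card_filter_split {E' E₁ : Finset G.E} (h : E' ⊆ E₁) (p : G.E → Prop)
    [DecidablePred p] :
    (E₁.filter p).card = (E'.filter p).card + ((E₁ \ E').filter p).card := by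
  rw [← Finset.card_union_of_disjoint
      (Finset.disjoint_filter_filter Finset.disjoint_sdiff),
    ← Finset.filter_union, Finset.union_sdiff_of_subset h]

lemma key_ineq (a : G.E → G.V) (ha : ∀ e, a e = G.s e ∨ a e = G.t e)
    (F : Finset G.E) (S : Finset G.V) :
    2 * (F.filter fun e => a e ∈ S).card ≤
      (F.filter fun e => G.s e ∈ S).card + (F.filter fun e => G.t e ∈ S).card
        + (F.filter fun e => e ∈ G.crossEdges S Sᶜ).card := by
  simp only [Finset.card_filter, Finset.mul_sum, ← Finset.sum_add_distrib]
  refine Finset.sum_le_sum fun e _ => ?_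
  have hc : e ∈ G.crossEdges S Sᶜ ↔
      ((G.s e ∈ S ∧ G.t e ∉ S) ∨ (G.s e ∉ S ∧ G.t e ∈ S)) := by
    simp only [crossEdges, Finset.mem_filter, Finset.mem_univ, true_and,
      Finset.mem_sdiff, Finset.mem_compl, not_not]
    tauto
  rcases ha e with h | h <;> rw [h] <;>
    by_cases hs : G.s e ∈ S <;> by_cases ht : G.t e ∈ S <;>
      simp [hs, ht, hc]

lemma betaP_le (P₁ P : PseudoDiv G) (a : G.E → G.V) (h : G.SpecChoice P₁ P a)
    (μ : G.V → ℝ) (S : Finset G.V) :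
    G.betaP μ P₁ S ≤ G.betaP μ P S := by
  obtain ⟨hE, ha, hD⟩ := h
  set F := P₁.E \ P.E with hF
  -- divisor sums
  have hsumD : ∑ v ∈ S, (P.D v : ℝ)
      = ∑ v ∈ S, (P₁.D v : ℝ) - ((F.filter fun e => a e ∈ S).card : ℝ) := by
    have h1 : ∀ v ∈ S, (P.D v : ℝ)
        = (P₁.D v : ℝ) - ((F.filter fun e => a e = v).card : ℝ) := by
      intro v _; rw [hD v]; push_cast; ring
    rw [Finset.sum_congr rfl h1, Finset.sum_sub_distrib]
    congr 1
    rw [← Nat.cast_sum, sum_card_filter_eq]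
  -- valence sums
  have hsumval : ∑ v ∈ S, (G.valE P₁.E v : ℝ)
      = ∑ v ∈ S, (G.valE P.E v : ℝ)
        + (((F.filter fun e => G.s e ∈ S).card : ℝ)
          + ((F.filter fun e => G.t e ∈ S).card : ℝ)) := by
    have hN : ∑ v ∈ S, G.valE P₁.E v = ∑ v ∈ S, G.valE P.E v
        + ((F.filter fun e => G.s e ∈ S).card + (F.filter fun e => G.t e ∈ S).card) := by
      rw [← sum_card_filter_eq F S G.s, ← sum_card_filter_eq F S G.t,
        ← Finset.sum_add_distrib, ← Finset.sum_add_distrib]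
      refine Finset.sum_congr rfl fun v _ => ?_
      unfold valE
      rw [card_filter_split hE (fun e => G.s e = v),
        card_filter_split hE (fun e => G.t e = v), ← hF]
      omega
    have hN' := congrArg (fun n : ℕ => (n : ℝ)) hN
    push_cast at hN' ⊢
    linarith
  -- cross edge counts
  have hcross : (((G.crossEdges S Sᶜ).filter fun e => e ∉ P.E).card : ℕ)
      = ((G.crossEdges S Sᶜ).filter fun e => e ∉ P₁.E).card
        + (F.filter fun e => e ∈ G.crossEdges S Sᶜ).card := by
    have h2 : (G.crossEdges S Sᶜ).filter (fun e => e ∈ F)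
        = F.filter fun e => e ∈ G.crossEdges S Sᶜ := by
      ext e; simp only [Finset.mem_filter]; tauto
    rw [← h2]
    simp only [Finset.card_filter, ← Finset.sum_add_distrib]
    refine Finset.sum_congr rfl fun e _ => ?_
    by_cases h1 : e ∈ P₁.E <;> by_cases h0 : e ∈ P.E
    · simp [hF, h1, h0]
    · simp [hF, h1, h0]
    · exact absurd (hE h0) h1
    · simp [hF, h1, h0]
  have key := key_ineq a ha F S
  have keyR : 2 * ((F.filter fun e => a e ∈ S).card : ℝ)
      ≤ ((F.filter fun e => G.s e ∈ S).card : ℝ)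
        + ((F.filter fun e => G.t e ∈ S).card : ℝ)
        + ((F.filter fun e => e ∈ G.crossEdges S Sᶜ).card : ℝ) := by
    exact_mod_cast key
  have hcrossR : ((((G.crossEdges S Sᶜ).filter fun e => e ∉ P.E).card : ℝ))
      = (((G.crossEdges S Sᶜ).filter fun e => e ∉ P₁.E).card : ℝ)
        + ((F.filter fun e => e ∈ G.crossEdges S Sᶜ).card : ℝ) := by
    exact_mod_cast hcross
  unfold betaP
  simp only [Finset.sum_add_distrib, ← Finset.sum_div]
  rw [hsumD, hsumval, hcrossR]
  linarith

end Multigraph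

/-- given a specialization `(𝓔₁,D₁) ≥ (𝓔₂,D₂)` (with witnessing choice `a`)
and `𝓔₂ ⊆ 𝓔 ⊆ 𝓔₁`, there is a unique intermediate pseudo-divisor `(𝓔,D)` through which
the specialization factors; moreover it is `μ`-semistable whenever `(𝓔₁,D₁)` is. -/
theorem exists_unique_intermediate (G : Multigraph)
    (P₁ P₂ : PseudoDiv G) (a : G.E → G.V) (hspec : G.SpecChoice P₁ P₂ a)
    (𝓔 : Finset G.E) (h₂ : P₂.E ⊆ 𝓔) (h₁ : 𝓔 ⊆ P₁.E) (μ : G.V → ℝ) :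
    (∃! P : PseudoDiv G, P.E = 𝓔 ∧ G.SpecChoice P₁ P a ∧ G.SpecChoice P P₂ a) ∧
      (G.Semistable μ P₁ → ∀ P : PseudoDiv G,
        P.E = 𝓔 → G.SpecChoice P₁ P a → G.SpecChoice P P₂ a → G.Semistable μ P) := by
  obtain ⟨hE21, ha, hD2⟩ := hspec
  set P : PseudoDiv G :=
    ⟨𝓔, fun v => P₁.D v - ((P₁.E \ 𝓔).filter fun e => a e = v).card⟩ with hP
  have hspec1 : G.SpecChoice P₁ P a := ⟨h₁, ha, fun v => rfl⟩
  have hun : P₁.E \ P₂.E = (P₁.E \ 𝓔) ∪ (𝓔 \ P₂.E) := by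
    ext e
    simp only [Finset.mem_sdiff, Finset.mem_union]
    have h1' : e ∈ 𝓔 → e ∈ P₁.E := fun h => h₁ h
    have h2' : e ∈ P₂.E → e ∈ 𝓔 := fun h => h₂ h
    tauto
  have hdisj : Disjoint (P₁.E \ 𝓔) (𝓔 \ P₂.E) := by
    rw [Finset.disjoint_left]
    intro e he1 he2
    exact (Finset.mem_sdiff.1 he1).2 (Finset.mem_sdiff.1 he2).1
  have hspec2 : G.SpecChoice P P₂ a := by
    refine ⟨h₂, ha, fun v => ?_⟩
    have hcard : ((P₁.E \ P₂.E).filter fun e => a e = v).card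
        = ((P₁.E \ 𝓔).filter fun e => a e = v).card
          + ((𝓔 \ P₂.E).filter fun e => a e = v).card := by
      rw [hun, Finset.filter_union,
        Finset.card_union_of_disjoint (Finset.disjoint_filter_filter hdisj)]
    rw [hD2 v, hcard]
    show P₁.D v - ((((P₁.E \ 𝓔).filter fun e => a e = v).card
        + ((𝓔 \ P₂.E).filter fun e => a e = v).card : ℕ) : ℤ)
      = (P₁.D v - ((P₁.E \ 𝓔).filter fun e => a e = v).card)
        - ((𝓔 \ P₂.E).filter fun e => a e = v).card
    push_cast
    ring
  refine ⟨⟨P, ⟨rfl, hspec1, hspec2⟩, ?_⟩, ?_⟩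
  · rintro ⟨E', D'⟩ ⟨hE', ⟨-, -, hD'⟩, -⟩
    subst hE'
    simp only [hP, PseudoDiv.mk.injEq, true_and]
    funext v
    exact hD' v
  · intro hss Q _ hsp _ S
    exact le_trans (hss S) (G.betaP_le P₁ Q a hsp μ S)
end

section
/- Let X be a tropical curve with model Γ, 𝓔 ⊆ E(Γ), and 𝓓 = ∑_{e∈𝓔} (p_e − q_e) a principal 𝓔-divisor with 𝓓 = Div(f). Orient each edge e with p_e ≠ q_e by the direction from q_e to p_e. Then: (1) the slope of f is 0 everywhere except on the segments from q_e to p_e, where it is 1; (2) if Γ_𝓔 (Γ with edges of 𝓔 removed) is connected, then 𝓓 = 0, i.e., p_e = q_e for all e ∈ 𝓔. -/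
open scoped Classical

/-- The points of the tropical curve with model `G` and edge lengths `ℓ`: vertices,
together with interior points `(e, t)` of edges, `0 < t < ℓ(e)` (the coordinate on each
edge runs from the source to the target). -/
def TropPt (G : Multigraph) (ℓ : G.E → ℝ) : Type :=
  G.V ⊕ {p : G.E × ℝ // 0 < p.2 ∧ p.2 < ℓ p.1}

/-- `g` is piecewise linear with integer slopes on `[0, L]`. -/
def PiecewiseLinear (L : ℝ) (g : ℝ → ℝ) : Prop :=
  ∃ (n : ℕ) (x : Fin (n + 1) → ℝ) (m : Fin n → ℤ),
    x 0 = 0 ∧ x (Fin.last n) = L ∧ Monotone x ∧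
    ∀ i : Fin n, ∀ t ∈ Set.Icc (x i.castSucc) (x i.succ),
      g t = g (x i.castSucc) + (m i : ℝ) * (t - x i.castSucc)

/-- The right-hand slope of `g` at `t`. -/
noncomputable def rightSlope (g : ℝ → ℝ) (t : ℝ) : ℝ := derivWithin g (Set.Ici t) t

/-- The left-hand slope of `g` at `t`. -/
noncomputable def leftSlope (g : ℝ → ℝ) (t : ℝ) : ℝ := derivWithin g (Set.Iic t) t

/-- A rational function on the tropical curve with model `G` and lengths `ℓ`: values at
the vertices and a piecewise linear function with integer slopes along each edge,
compatible at the endpoints. -/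
structure RatFn (G : Multigraph) (ℓ : G.E → ℝ) where
  vertVal : G.V → ℝ
  edgeFn : G.E → ℝ → ℝ
  source_eq : ∀ e, edgeFn e 0 = vertVal (G.s e)
  target_eq : ∀ e, edgeFn e (ℓ e) = vertVal (G.t e)
  pl : ∀ e, PiecewiseLinear (ℓ e) (edgeFn e)

/-- The value of a rational function at a point of the tropical curve. -/
noncomputable def RatFn.value {G : Multigraph} {ℓ : G.E → ℝ} (f : RatFn G ℓ) :
    TropPt G ℓ → ℝ
  | Sum.inl v => f.vertVal v
  | Sum.inr p => f.edgeFn p.1.1 p.1.2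

/-- The principal divisor `Div(f)` of a rational function `f`: at each point, the sum of
the incoming slopes of `f`. -/
noncomputable def RatFn.div {G : Multigraph} {ℓ : G.E → ℝ} (f : RatFn G ℓ) :
    TropPt G ℓ → ℝ
  | Sum.inl v =>
      ∑ e, ((if G.s e = v then -rightSlope (f.edgeFn e) 0 else 0) +
            (if G.t e = v then leftSlope (f.edgeFn e) (ℓ e) else 0))
  | Sum.inr p => leftSlope (f.edgeFn p.1.1) p.1.2 - rightSlope (f.edgeFn p.1.1) p.1.2

section Helpers

open Set Filter

lemma affine_hasDerivWithinAt (C a m : ℝ) (s : Set ℝ) (t0 : ℝ) :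
    HasDerivWithinAt (fun t => C + m * (t - a)) m s t0 := by
  have h : HasDerivWithinAt (fun t : ℝ => C + m * (t - a)) (m * 1) s t0 :=
    (((hasDerivWithinAt_id t0 s).sub_const a).const_mul m).const_add C
  simpa using h

lemma rightSlope_affine {g : ℝ → ℝ} {a b : ℝ} {m : ℤ}
    (hfn : ∀ t ∈ Set.Icc a b, g t = g a + (m:ℝ) * (t - a))
    {t0 : ℝ} (h1 : a ≤ t0) (h2 : t0 < b) : rightSlope g t0 = m := by
  have hmem : Set.Ici t0 ∩ Set.Iio b ∈ nhdsWithin t0 (Set.Ici t0) :=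
    Filter.inter_mem self_mem_nhdsWithin
      (mem_nhdsWithin_of_mem_nhds (Iio_mem_nhds h2))
  have heq : g =ᶠ[nhdsWithin t0 (Set.Ici t0)] (fun t => g a + (m:ℝ) * (t - a)) := by
    filter_upwards [hmem] with t ht
    exact hfn t ⟨le_trans h1 ht.1, le_of_lt ht.2⟩
  have h0 : g t0 = g a + (m:ℝ) * (t0 - a) := hfn t0 ⟨h1, le_of_lt h2⟩
  rw [rightSlope, heq.derivWithin_eq h0]
  exact (affine_hasDerivWithinAt _ _ _ _ _).derivWithin (uniqueDiffOn_Ici t0 t0 Set.self_mem_Ici)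

lemma leftSlope_affine {g : ℝ → ℝ} {a b : ℝ} {m : ℤ}
    (hfn : ∀ t ∈ Set.Icc a b, g t = g a + (m:ℝ) * (t - a))
    {t0 : ℝ} (h1 : a < t0) (h2 : t0 ≤ b) : leftSlope g t0 = m := by
  have hmem : Set.Iic t0 ∩ Set.Ioi a ∈ nhdsWithin t0 (Set.Iic t0) :=
    Filter.inter_mem self_mem_nhdsWithin
      (mem_nhdsWithin_of_mem_nhds (Ioi_mem_nhds h1))
  have heq : g =ᶠ[nhdsWithin t0 (Set.Iic t0)] (fun t => g a + (m:ℝ) * (t - a)) := by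
    filter_upwards [hmem] with t ht
    exact hfn t ⟨le_of_lt ht.2, le_trans ht.1 h2⟩
  have h0 : g t0 = g a + (m:ℝ) * (t0 - a) := hfn t0 ⟨le_of_lt h1, h2⟩
  rw [leftSlope, heq.derivWithin_eq h0]
  exact (affine_hasDerivWithinAt _ _ _ _ _).derivWithin (uniqueDiffOn_Iic t0 t0 Set.self_mem_Iic)

lemma find_piece {n : ℕ} (x : Fin (n+1) → ℝ) (t : ℝ)
    (h0 : x 0 ≤ t) (h1 : t < x (Fin.last n)) :
    ∃ i : Fin n, x i.castSucc ≤ t ∧ t < x i.succ := by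
  classical
  set S : Finset (Fin (n+1)) := Finset.univ.filter (fun j => x j ≤ t) with hS
  have hne : S.Nonempty := ⟨0, by simp [hS, h0]⟩
  set j := S.max' hne with hj
  have hjS : j ∈ S := S.max'_mem hne
  have hjt : x j ≤ t := by simpa [hS] using hjS
  have hjlt : (j : ℕ) < n := by
    rcases lt_or_eq_of_le (Nat.lt_succ_iff.mp j.isLt) with h | h
    · exact h
    · exfalso
      have : j = Fin.last n := Fin.ext h
      rw [this] at hjt; linarith
  refine ⟨⟨j, hjlt⟩, ?_, ?_⟩
  · simpa using hjt
  · by_contra hle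
    push_neg at hle
    have hmem : (⟨(j:ℕ)+1, Nat.succ_lt_succ hjlt⟩ : Fin (n+1)) ∈ S := by
      simp only [hS, Finset.mem_filter, Finset.mem_univ, true_and]
      simpa using hle
    have := S.le_max' _ hmem
    rw [← hj] at this
    have : (j:ℕ) + 1 ≤ (j:ℕ) := this
    omega

lemma edge_key (c : ℝ → ℝ) (F : Finset ℝ) (hF : ∀ u, u ∉ F → c u = 0) :
    ∀ (n : ℕ) (g : ℝ → ℝ) (a b : ℝ) (x : Fin (n+1) → ℝ) (m : Fin n → ℤ),
    x 0 = a → x (Fin.last n) = b → Monotone x →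
    (∀ i : Fin n, ∀ t ∈ Set.Icc (x i.castSucc) (x i.succ),
        g t = g (x i.castSucc) + (m i : ℝ) * (t - x i.castSucc)) →
    (∀ u, a < u → u < b → leftSlope g u - rightSlope g u = c u) →
    (∀ t, a ≤ t → t < b →
       rightSlope g t = rightSlope g a - ∑ u ∈ F, (if a < u ∧ u ≤ t then c u else 0)) ∧
    (a < b → leftSlope g b = rightSlope g a - ∑ u ∈ F, (if a < u ∧ u < b then c u else 0)) ∧
    (g b - g a = rightSlope g a * (b - a)
       - ∑ u ∈ F, (if a < u ∧ u < b then c u * (b - u) else 0)) := by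
  intro n
  induction n with
  | zero =>
    intro g a b x m h0 hl hmono hpl hc
    have hab : a = b := by rw [← h0, ← hl]; rfl
    subst hab
    refine ⟨fun t h1 h2 => absurd (lt_of_le_of_lt h1 h2) (lt_irrefl a),
      fun h => absurd h (lt_irrefl a), ?_⟩
    have hz : ∀ u ∈ F, (if a < u ∧ u < a then c u * (a - u) else 0) = 0 := by
      intro u _
      rw [if_neg]
      rintro ⟨hh1, hh2⟩; exact absurd (hh1.trans hh2) (lt_irrefl a)
    rw [Finset.sum_eq_zero hz]
    ring
  | succ n IH =>
    intro g a b x m h0 hl hmono hpl hc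
    set b' := x (Fin.last n).castSucc with hb'
    have hb'le : b' ≤ b := by rw [← hl]; exact hmono (Fin.le_last _)
    have hab'le : a ≤ b' := by rw [← h0]; exact hmono (Fin.zero_le _)
    have hy0 : (fun i : Fin (n+1) => x i.castSucc) 0 = a := by
      simpa [Fin.castSucc_zero] using h0
    have hyl : (fun i : Fin (n+1) => x i.castSucc) (Fin.last n) = b' := rfl
    have hymono : Monotone (fun i : Fin (n+1) => x i.castSucc) := by
      intro i j hij
      exact hmono (by simpa using hij)
    have hypl : ∀ i : Fin n, ∀ t ∈ Set.Icc ((fun i : Fin (n+1) => x i.castSucc) i.castSucc)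
        ((fun i : Fin (n+1) => x i.castSucc) i.succ),
        g t = g ((fun i : Fin (n+1) => x i.castSucc) i.castSucc)
          + ((fun i : Fin n => m i.castSucc) i : ℝ)
            * (t - (fun i : Fin (n+1) => x i.castSucc) i.castSucc) := by
      intro i t ht
      have := hpl i.castSucc
      rw [Fin.succ_castSucc] at this
      exact this t ht
    have hyc : ∀ u, a < u → u < b' → leftSlope g u - rightSlope g u = c u :=
      fun u h1 h2 => hc u h1 (lt_of_lt_of_le h2 hb'le)
    obtain ⟨H1, H2, H3⟩ := IH g a b' (fun i => x i.castSucc) (fun i => m i.castSucc)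
      hy0 hyl hymono hypl hyc
    set M := m (Fin.last n) with hM0
    have hlastfn : ∀ t ∈ Set.Icc b' b, g t = g b' + (M:ℝ) * (t - b') := by
      have := hpl (Fin.last n)
      rw [Fin.succ_last, hl] at this
      exact this
    by_cases hbb : b' = b
    · refine ⟨fun t h1 h2 => H1 t h1 (by rw [hbb]; exact h2), fun h => ?_, ?_⟩
      · rw [← hbb]; exact H2 (by rw [hbb]; exact h)
      · rw [← hbb]; exact H3
    · have hb'b : b' < b := lt_of_le_of_ne hb'le hbb
      have hR : ∀ t, b' ≤ t → t < b → rightSlope g t = (M:ℝ) :=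
        fun t h1 h2 => rightSlope_affine hlastfn h1 h2
      have hL : ∀ t, b' < t → t ≤ b → leftSlope g t = (M:ℝ) :=
        fun t h1 h2 => leftSlope_affine hlastfn h1 h2
      have hczero : ∀ u, b' < u → u < b → c u = 0 := by
        intro u h1 h2
        rw [← hc u (lt_of_le_of_lt hab'le h1) h2, hL u h1 (le_of_lt h2),
          hR u (le_of_lt h1) h2]
        ring
      by_cases hab : a = b'
      · have hsa : rightSlope g a = (M:ℝ) := hR a (le_of_eq hab.symm) (by rw [hab]; exact hb'b)
        have hz : ∀ t', t' < b → ∀ u ∈ F, (if a < u ∧ u ≤ t' then c u else 0) = 0 := by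
          intro t' ht' u _
          split_ifs with h
          · exact hczero u (by rw [← hab]; exact h.1) (lt_of_le_of_lt h.2 ht')
          · rfl
        have hz' : ∀ u ∈ F, (if a < u ∧ u < b then c u else 0) = 0 := by
          intro u _
          split_ifs with h
          · exact hczero u (by rw [← hab]; exact h.1) h.2
          · rfl
        refine ⟨fun t h1 h2 => ?_, fun _ => ?_, ?_⟩
        · rw [hR t (by rw [← hab]; exact h1) h2, hsa, Finset.sum_eq_zero (hz t h2)]; ring
        · rw [hL b hb'b le_rfl, hsa, Finset.sum_eq_zero hz']; ring
        · have hgb : g b = g b' + (M:ℝ) * (b - b') := hlastfn b ⟨le_of_lt hb'b, le_rfl⟩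
          have hz'' : ∀ u ∈ F, (if a < u ∧ u < b then c u * (b - u) else 0) = 0 := by
            intro u hu
            split_ifs with h
            · rw [hczero u (by rw [← hab]; exact h.1) h.2]; ring
            · rfl
          rw [hgb, hsa, Finset.sum_eq_zero hz'', ← hab]
          ring
      · have haltb' : a < b' := lt_of_le_of_ne hab'le hab
        have hLb' := H2 haltb'
        have hRb' : rightSlope g b' = (M:ℝ) := hR b' le_rfl hb'b
        have hcb' : leftSlope g b' - rightSlope g b' = c b' := hc b' haltb' hb'b
        have hsum_split : ∑ u ∈ F, (if a < u ∧ u ≤ b' then c u else 0)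
            = (∑ u ∈ F, (if a < u ∧ u < b' then c u else 0)) + c b' := by
          have hpt : ∀ u ∈ F, (if a < u ∧ u ≤ b' then c u else 0)
              = (if a < u ∧ u < b' then c u else 0) + (if u = b' then c u else 0) := by
            intro u _
            by_cases h : u = b'
            · subst h; simp [haltb', lt_irrefl]
            · have hiff : (u < b') = (u ≤ b') := by
                apply propext; exact ⟨le_of_lt, fun hle => lt_of_le_of_ne hle h⟩
              simp [h, hiff]
          rw [Finset.sum_congr rfl hpt, Finset.sum_add_distrib]
          congr 1
          rw [Finset.sum_ite_eq' F b' c]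
          split_ifs with h
          · rfl
          · exact (hF b' h).symm
        have hM : (M:ℝ) = rightSlope g a - ∑ u ∈ F, (if a < u ∧ u ≤ b' then c u else 0) := by
          rw [hsum_split]
          rw [hLb', hRb'] at hcb'
          linarith
        refine ⟨fun t h1 h2 => ?_, fun _ => ?_, ?_⟩
        · by_cases ht : t < b'
          · exact H1 t h1 ht
          · have hb't : b' ≤ t := le_of_not_gt ht
            rw [hR t hb't h2, hM]
            congr 1
            refine Finset.sum_congr rfl fun u _ => ?_
            by_cases h1u : a < u
            · by_cases h2u : u ≤ b'
              · simp [h1u, h2u, h2u.trans hb't]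
              · have hb'u : b' < u := lt_of_not_ge h2u
                by_cases h3u : u ≤ t
                · simp [h1u, h2u, h3u, hczero u hb'u (lt_of_le_of_lt h3u h2)]
                · simp [h1u, h2u, h3u]
            · simp [h1u]
        · rw [hL b hb'b le_rfl, hM]
          congr 1
          refine Finset.sum_congr rfl fun u _ => ?_
          by_cases h1u : a < u
          · by_cases h2u : u ≤ b'
            · simp [h1u, h2u, lt_of_le_of_lt h2u hb'b]
            · have hb'u : b' < u := lt_of_not_ge h2u
              by_cases h3u : u < b
              · simp [h1u, h2u, h3u, hczero u hb'u h3u]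
              · simp [h1u, h2u, h3u]
          · simp [h1u]
        · have hgb : g b = g b' + (M:ℝ) * (b - b') := hlastfn b ⟨le_of_lt hb'b, le_rfl⟩
          have key : ∑ u ∈ F, (if a < u ∧ u < b then c u * (b - u) else 0)
              = ∑ u ∈ F, ((if a < u ∧ u < b' then c u * (b' - u) else 0)
                  + (if a < u ∧ u ≤ b' then c u else 0) * (b - b')) := by
            refine Finset.sum_congr rfl fun u _ => ?_
            by_cases h1u : a < u
            · rcases lt_trichotomy u b' with h2u | h2u | h2u
              · have hub : u < b := h2u.trans hb'b
                rw [if_pos (⟨h1u, hub⟩ : a < u ∧ u < b), if_pos (⟨h1u, h2u⟩ : a < u ∧ u < b'),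
                  if_pos (⟨h1u, le_of_lt h2u⟩ : a < u ∧ u ≤ b')]
                ring
              · have hub : u < b := by rw [h2u]; exact hb'b
                have hnb' : ¬ u < b' := by rw [h2u]; exact lt_irrefl b'
                rw [if_pos (⟨h1u, hub⟩ : a < u ∧ u < b), if_neg (fun h => hnb' h.2),
                  if_pos (⟨h1u, le_of_eq h2u⟩ : a < u ∧ u ≤ b')]
                rw [h2u]
                ring
              · have h4 : ¬ u < b' := not_lt.mpr (le_of_lt h2u)
                have h5 : ¬ u ≤ b' := not_le.mpr h2u
                by_cases h3u : u < b
                · rw [if_pos ⟨h1u, h3u⟩, if_neg (fun h => h4 h.2), if_neg (fun h => h5 h.2),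
                    hczero u h2u h3u]
                  ring
                · rw [if_neg (fun h => h3u h.2), if_neg (fun h => h4 h.2),
                    if_neg (fun h => h5 h.2)]
                  ring
            · simp [h1u]
          rw [hgb, key, Finset.sum_add_distrib, ← Finset.sum_mul]
          linear_combination H3 + (b - b') * hM

noncomputable def cE (inE : Prop) [Decidable inE] (pe qe u : ℝ) : ℝ :=
  (if inE ∧ pe = u then 1 else 0) - (if inE ∧ qe = u then 1 else 0)

lemma term_nonneg (k : ℤ) (L d : ℝ) (hd : |d| < L) :
    0 ≤ (k:ℝ) * ((k:ℝ) * L + d) ∧ ((k:ℝ) * ((k:ℝ) * L + d) = 0 → (k:ℝ) = 0) := by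
  rcases eq_or_ne k 0 with h | h
  · subst h; simp
  · have h1 : (1:ℝ) ≤ |(k:ℝ)| := by exact_mod_cast Int.one_le_abs h
    have hpos : 0 < (k:ℝ) * ((k:ℝ) * L + d) := by
      have hL : 0 < L := lt_of_le_of_lt (abs_nonneg d) hd
      have hkL : L ≤ |(k:ℝ)| * L := le_mul_of_one_le_left hL.le h1
      have hfin : 0 < |(k:ℝ)| * (|(k:ℝ)| * L - |d|) :=
        mul_pos (lt_of_lt_of_le one_pos h1) (by linarith)
      have e2 : -(|(k:ℝ)| * |d|) ≤ (k:ℝ) * d := by rw [← abs_mul]; exact neg_abs_le _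
      nlinarith [e2, hfin, sq_abs (k:ℝ)]
    exact ⟨le_of_lt hpos, fun h0 => absurd h0.symm (ne_of_lt hpos)⟩

end Helpers
/-- let `𝓓 = ∑_{e∈𝓔}(p_e − q_e) = Div(f)` be a principal `𝓔`-divisor.
Then (1) the slope of `f` is `0` everywhere except on the segments from `q_e` to `p_e`,
where it is `1` (in the orientation from `q_e` to `p_e`; in the coordinate of the edge
this is `+1` on `[q_e, p_e)` when `q_e ≤ p_e` and `−1` on `[p_e, q_e)` otherwise); and
(2) if `Γ_𝓔` is connected then `𝓓 = 0`, i.e. `p_e = q_e` for all `e ∈ 𝓔`. -/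
theorem slope_of_E_divisor (G : Multigraph) (ℓ : G.E → ℝ)
    (hℓ : ∀ e, 0 < ℓ e) (𝓔 : Finset G.E) (p q : G.E → ℝ)
    (hp : ∀ e ∈ 𝓔, 0 < p e ∧ p e < ℓ e) (hq : ∀ e ∈ 𝓔, 0 < q e ∧ q e < ℓ e)
    (f : RatFn G ℓ)
    (hdivV : ∀ v, f.div (Sum.inl v) = 0)
    (hdivE : ∀ x : {y : G.E × ℝ // 0 < y.2 ∧ y.2 < ℓ y.1},
      f.div (Sum.inr x) = (if x.1.1 ∈ 𝓔 ∧ p x.1.1 = x.1.2 then (1 : ℝ) else 0)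
        - (if x.1.1 ∈ 𝓔 ∧ q x.1.1 = x.1.2 then (1 : ℝ) else 0)) :
    (∀ e, ∀ t ∈ Set.Ico (0 : ℝ) (ℓ e),
      rightSlope (f.edgeFn e) t =
        if e ∈ 𝓔 ∧ q e ≤ t ∧ t < p e then 1
        else if e ∈ 𝓔 ∧ p e ≤ t ∧ t < q e then -1 else 0) ∧
    ((∀ u v : G.V, Relation.EqvGen (G.adjOn 𝓔ᶜ) u v) → ∀ e ∈ 𝓔, p e = q e) := by
  classical
  -- Per-edge analysis via edge_key
  have hedge : ∀ e : G.E,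
      (∀ t, 0 ≤ t → t < ℓ e → rightSlope (f.edgeFn e) t
          = rightSlope (f.edgeFn e) 0 - ∑ u ∈ ({p e, q e} : Finset ℝ),
              (if 0 < u ∧ u ≤ t then cE (e ∈ 𝓔) (p e) (q e) u else 0)) ∧
      (leftSlope (f.edgeFn e) (ℓ e) = rightSlope (f.edgeFn e) 0) ∧
      (f.vertVal (G.t e) - f.vertVal (G.s e)
          = rightSlope (f.edgeFn e) 0 * ℓ e + (if e ∈ 𝓔 then p e - q e else 0)) := by
    intro e
    obtain ⟨n, x, m, hx0, hxl, hmono, hpl⟩ := f.pl e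
    have hFsupp : ∀ u, u ∉ ({p e, q e} : Finset ℝ) → cE (e ∈ 𝓔) (p e) (q e) u = 0 := by
      intro u hu
      simp only [Finset.mem_insert, Finset.mem_singleton, not_or] at hu
      have h1 : ¬(e ∈ 𝓔 ∧ p e = u) := fun h => hu.1 h.2.symm
      have h2 : ¬(e ∈ 𝓔 ∧ q e = u) := fun h => hu.2 h.2.symm
      simp [cE, h1, h2]
    have hcslope : ∀ u, 0 < u → u < ℓ e →
        leftSlope (f.edgeFn e) u - rightSlope (f.edgeFn e) u = cE (e ∈ 𝓔) (p e) (q e) u := by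
      intro u h1 h2
      have := hdivE ⟨(e, u), h1, h2⟩
      simpa [RatFn.div, cE] using this
    obtain ⟨E1, E2, E3⟩ := edge_key (cE (e ∈ 𝓔) (p e) (q e)) {p e, q e} hFsupp n
      (f.edgeFn e) 0 (ℓ e) x m hx0 hxl hmono hpl hcslope
    have hcp1 : e ∈ 𝓔 → p e ≠ q e → cE (e ∈ 𝓔) (p e) (q e) (p e) = 1 := by
      intro he hpq
      rw [cE, if_pos ⟨he, rfl⟩, if_neg (fun h => hpq h.2.symm)]
      ring
    have hcq1 : e ∈ 𝓔 → p e ≠ q e → cE (e ∈ 𝓔) (p e) (q e) (q e) = -1 := by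
      intro he hpq
      rw [cE, if_neg (fun h => hpq h.2), if_pos ⟨he, rfl⟩]
      ring
    have hcq0 : p e = q e → cE (e ∈ 𝓔) (p e) (q e) (q e) = 0 := by
      intro hpq
      rw [cE, hpq]
      ring_nf
    have hcnot : e ∉ 𝓔 → ∀ u, cE (e ∈ 𝓔) (p e) (q e) u = 0 := by
      intro he u
      rw [cE, if_neg (fun h => he h.1), if_neg (fun h => he h.1)]
      ring
    have hsum0 : ∑ u ∈ ({p e, q e} : Finset ℝ),
        (if 0 < u ∧ u < ℓ e then cE (e ∈ 𝓔) (p e) (q e) u else 0) = 0 := by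
      by_cases he : e ∈ 𝓔
      · obtain ⟨hp1, hp2⟩ := hp e he
        obtain ⟨hq1, hq2⟩ := hq e he
        by_cases hpq : p e = q e
        · have hpair : ({p e, q e} : Finset ℝ) = {q e} := by rw [hpq]; simp
          rw [hpair, Finset.sum_singleton, if_pos ⟨hq1, hq2⟩, hcq0 hpq]
        · rw [Finset.sum_pair hpq, if_pos ⟨hp1, hp2⟩, if_pos ⟨hq1, hq2⟩,
            hcp1 he hpq, hcq1 he hpq]
          ring
      · refine Finset.sum_eq_zero fun u _ => ?_
        rw [hcnot he u]
        simp
    have hsum1 : ∑ u ∈ ({p e, q e} : Finset ℝ),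
        (if 0 < u ∧ u < ℓ e then cE (e ∈ 𝓔) (p e) (q e) u * (ℓ e - u) else 0)
        = -(if e ∈ 𝓔 then p e - q e else 0) := by
      by_cases he : e ∈ 𝓔
      · obtain ⟨hp1, hp2⟩ := hp e he
        obtain ⟨hq1, hq2⟩ := hq e he
        rw [if_pos he]
        by_cases hpq : p e = q e
        · have hpair : ({p e, q e} : Finset ℝ) = {q e} := by rw [hpq]; simp
          rw [hpair, Finset.sum_singleton, if_pos ⟨hq1, hq2⟩, hcq0 hpq, hpq]
          ring
        · rw [Finset.sum_pair hpq, if_pos ⟨hp1, hp2⟩, if_pos ⟨hq1, hq2⟩,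
            hcp1 he hpq, hcq1 he hpq]
          ring
      · rw [if_neg he]
        rw [Finset.sum_eq_zero fun u _ => by rw [hcnot he u]; simp]
        ring
    refine ⟨E1, ?_, ?_⟩
    · rw [E2 (hℓ e), hsum0]; ring
    · have := E3
      rw [hsum1] at this
      rw [← f.source_eq e, ← f.target_eq e]
      linarith
  -- integrality of initial slopes
  have hint : ∀ e : G.E, ∃ k : ℤ, rightSlope (f.edgeFn e) 0 = k := by
    intro e
    obtain ⟨n, x, m, hx0, hxl, hmono, hpl⟩ := f.pl e
    obtain ⟨i, hi1, hi2⟩ := find_piece x 0 (le_of_eq hx0) (by rw [hxl]; exact hℓ e)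
    exact ⟨m i, rightSlope_affine (hpl i) hi1 hi2⟩
  -- vertex balance
  have hbal : ∀ v, ∑ e, ((if G.t e = v then rightSlope (f.edgeFn e) 0 else 0)
      - (if G.s e = v then rightSlope (f.edgeFn e) 0 else 0)) = 0 := by
    intro v
    have hv := hdivV v
    simp only [RatFn.div] at hv
    have heq : ∑ e, ((if G.t e = v then rightSlope (f.edgeFn e) 0 else 0)
        - (if G.s e = v then rightSlope (f.edgeFn e) 0 else 0))
        = ∑ e, ((if G.s e = v then -rightSlope (f.edgeFn e) 0 else 0)
            + (if G.t e = v then leftSlope (f.edgeFn e) (ℓ e) else 0)) := by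
      refine Finset.sum_congr rfl fun e _ => ?_
      rw [(hedge e).2.1]
      split_ifs <;> ring
    rw [heq, hv]
  -- double counting
  have key : ∀ (w : G.E → G.V), ∑ e, rightSlope (f.edgeFn e) 0 * f.vertVal (w e)
      = ∑ v, (∑ e, if w e = v then rightSlope (f.edgeFn e) 0 else 0) * f.vertVal v := by
    intro w
    have hsingle : ∀ e : G.E, rightSlope (f.edgeFn e) 0 * f.vertVal (w e)
        = ∑ v, (if w e = v then rightSlope (f.edgeFn e) 0 else 0) * f.vertVal v := by
      intro e
      rw [Finset.sum_eq_single (w e)]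
      · rw [if_pos rfl]
      · intro v _ hv
        rw [if_neg (fun h => hv h.symm), zero_mul]
      · intro h; exact absurd (Finset.mem_univ _) h
    rw [Finset.sum_congr rfl fun e _ => hsingle e, Finset.sum_comm]
    exact Finset.sum_congr rfl fun v _ => (Finset.sum_mul _ _ _).symm
  have hE0 : ∑ e, rightSlope (f.edgeFn e) 0
      * (f.vertVal (G.t e) - f.vertVal (G.s e)) = 0 := by
    have expand : ∀ e : G.E, rightSlope (f.edgeFn e) 0
        * (f.vertVal (G.t e) - f.vertVal (G.s e))
        = rightSlope (f.edgeFn e) 0 * f.vertVal (G.t e)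
          - rightSlope (f.edgeFn e) 0 * f.vertVal (G.s e) := fun e => by ring
    rw [Finset.sum_congr rfl fun e _ => expand e, Finset.sum_sub_distrib, key G.t, key G.s,
      ← Finset.sum_sub_distrib]
    refine Finset.sum_eq_zero fun v _ => ?_
    rw [← sub_mul, ← Finset.sum_sub_distrib, hbal v, zero_mul]
  have hterm : ∑ e, rightSlope (f.edgeFn e) 0 * (rightSlope (f.edgeFn e) 0 * ℓ e
      + (if e ∈ 𝓔 then p e - q e else 0)) = 0 := by
    calc ∑ e, rightSlope (f.edgeFn e) 0 * (rightSlope (f.edgeFn e) 0 * ℓ e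
          + (if e ∈ 𝓔 then p e - q e else 0))
        = ∑ e, rightSlope (f.edgeFn e) 0 * (f.vertVal (G.t e) - f.vertVal (G.s e)) :=
          Finset.sum_congr rfl fun e _ => by rw [(hedge e).2.2]
      _ = 0 := hE0
  have hdelta : ∀ e : G.E, |(if e ∈ 𝓔 then p e - q e else 0)| < ℓ e := by
    intro e
    by_cases he : e ∈ 𝓔
    · obtain ⟨hp1, hp2⟩ := hp e he
      obtain ⟨hq1, hq2⟩ := hq e he
      rw [if_pos he, abs_lt]
      constructor <;> linarith
    · rw [if_neg he, abs_zero]; exact hℓ e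
  have hzero : ∀ e : G.E, rightSlope (f.edgeFn e) 0 = 0 := by
    have hnn : ∀ e ∈ Finset.univ, (0:ℝ) ≤ rightSlope (f.edgeFn e) 0
        * (rightSlope (f.edgeFn e) 0 * ℓ e + (if e ∈ 𝓔 then p e - q e else 0)) := by
      intro e _
      obtain ⟨k, hk⟩ := hint e
      rw [hk]
      exact (term_nonneg k (ℓ e) _ (hdelta e)).1
    have hall := (Finset.sum_eq_zero_iff_of_nonneg hnn).mp hterm
    intro e
    obtain ⟨k, hk⟩ := hint e
    have := hall e (Finset.mem_univ e)
    rw [hk] at this ⊢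
    exact (term_nonneg k (ℓ e) _ (hdelta e)).2 this
  constructor
  · -- part (1)
    intro e t ht
    obtain ⟨ht0, htl⟩ := ht
    rw [(hedge e).1 t ht0 htl, hzero e]
    by_cases he : e ∈ 𝓔
    · obtain ⟨hp1, hp2⟩ := hp e he
      obtain ⟨hq1, hq2⟩ := hq e he
      have hval : ∑ u ∈ ({p e, q e} : Finset ℝ),
          (if 0 < u ∧ u ≤ t then cE (e ∈ 𝓔) (p e) (q e) u else 0)
          = (if p e ≤ t then (1:ℝ) else 0) - (if q e ≤ t then (1:ℝ) else 0) := by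
        by_cases hpq : p e = q e
        · have hpair : ({p e, q e} : Finset ℝ) = {q e} := by rw [hpq]; simp
          have hc0 : cE (e ∈ 𝓔) (p e) (q e) (q e) = 0 := by rw [cE, hpq]; ring_nf
          rw [hpair, Finset.sum_singleton, hpq]
          split_ifs with h1 <;> simp [cE]
        · have hcp : cE (e ∈ 𝓔) (p e) (q e) (p e) = 1 := by
            rw [cE, if_pos ⟨he, rfl⟩, if_neg (fun h => hpq h.2.symm)]; ring
          have hcq : cE (e ∈ 𝓔) (p e) (q e) (q e) = -1 := by
            rw [cE, if_neg (fun h => hpq h.2), if_pos ⟨he, rfl⟩]; ring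
          rw [Finset.sum_pair hpq]
          by_cases hpt : p e ≤ t <;> by_cases hqt : q e ≤ t
          · rw [if_pos ⟨hp1, hpt⟩, if_pos ⟨hq1, hqt⟩, hcp, hcq, if_pos hpt, if_pos hqt]
            ring
          · rw [if_pos ⟨hp1, hpt⟩, if_neg (fun h => hqt h.2), hcp, if_pos hpt, if_neg hqt]
            ring
          · rw [if_neg (fun h => hpt h.2), if_pos ⟨hq1, hqt⟩, hcq, if_neg hpt, if_pos hqt]
            ring
          · rw [if_neg (fun h => hpt h.2), if_neg (fun h => hqt h.2), if_neg hpt, if_neg hqt]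
            ring
      rw [hval]
      by_cases hpt : p e ≤ t <;> by_cases hqt : q e ≤ t
      · rw [if_pos hpt, if_pos hqt, if_neg (fun h => absurd h.2.2 (not_lt.mpr hpt)),
          if_neg (fun h => absurd h.2.2 (not_lt.mpr hqt))]
        ring
      · rw [if_pos hpt, if_neg hqt, if_neg (fun h => hqt h.2.1),
          if_pos ⟨he, hpt, lt_of_not_ge hqt⟩]
        ring
      · rw [if_neg hpt, if_pos hqt, if_pos ⟨he, hqt, lt_of_not_ge hpt⟩]
        ring
      · rw [if_neg hpt, if_neg hqt, if_neg (fun h => hqt h.2.1), if_neg (fun h => hpt h.2.1)]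
        ring
    · have hval0 : ∑ u ∈ ({p e, q e} : Finset ℝ),
          (if 0 < u ∧ u ≤ t then cE (e ∈ 𝓔) (p e) (q e) u else 0) = 0 := by
        refine Finset.sum_eq_zero fun u _ => ?_
        have : cE (e ∈ 𝓔) (p e) (q e) u = 0 := by
          rw [cE, if_neg (fun h => he h.1), if_neg (fun h => he h.1)]; ring
        rw [this]
        simp
      rw [hval0, if_neg (fun h => he h.1), if_neg (fun h => he h.1)]
      ring
  · -- part (2)
    intro hconn e he
    have hstep : ∀ u v : G.V, Relation.EqvGen (G.adjOn 𝓔ᶜ) u v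
        → f.vertVal u = f.vertVal v := by
      intro u v huv
      induction huv with
      | rel u v hadj =>
        obtain ⟨e', he', hor⟩ := hadj
        have he'' : e' ∉ 𝓔 := Finset.mem_compl.mp he'
        have hlen := (hedge e').2.2
        rw [hzero e', if_neg he''] at hlen
        rcases hor with ⟨h1, h2⟩ | ⟨h1, h2⟩ <;> rw [← h1, ← h2] <;> linarith
      | refl u => rfl
      | symm u v _ ih => exact ih.symm
      | trans u v w _ _ ih1 ih2 => exact ih1.trans ih2
    have hts : f.vertVal (G.t e) = f.vertVal (G.s e) :=
      hstep _ _ (hconn (G.t e) (G.s e))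
    have hlen := (hedge e).2.2
    rw [hzero e, if_pos he] at hlen
    linarith
end

section
/- Let X be a tropical curve with oriented model Γ and let 𝓓 = ∑_{e∈𝓔} (p_e − q_e) be an 𝓔-divisor on X for 𝓔 ⊆ E(Γ). Define u_𝓓 ∈ ℝ^𝓔 by (u_𝓓)_e = ε(e)·ℓ(segment from q_e to p_e), where ε(e) = 1 if the segment orientation from q_e to p_e agrees with the orientation of e, and −1 otherwise. Let L_𝓔 ⊆ ℝ^𝓔 be the subspace cut out by the equations ∑_{e ∈ γ ∩ 𝓔} γ(e)·x_e = 0 over all cycles γ of Γ. Then u_𝓓 ∈ L_𝓔 if and only if 𝓓 is a principal divisor on X. -/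
open scoped Classical

namespace Multigraph

variable (G : Multigraph)

/-- The vector `u_V ∈ ℝ^{E(Γ)}`: coefficient `+1` on edges oriented from `S` to `Sᶜ`,
`−1` on edges oriented from `Sᶜ` to `S`, and `0` elsewhere. -/
noncomputable def uVec (S : Finset G.V) : G.E → ℝ := fun e =>
  (if G.s e ∈ S ∧ G.t e ∉ S then (1 : ℝ) else 0)
    - (if G.t e ∈ S ∧ G.s e ∉ S then (1 : ℝ) else 0)

/-- The subspace `L_𝓔 ⊆ ℝ^{E(Γ)}` spanned by the vectors `u_V` over all `V ⊆ V(Γ)` with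
`E(V,V^c) ⊆ 𝓔` (equivalently, cut out by the cycle equations). -/
noncomputable def Lspace (𝓔 : Finset G.E) : Submodule ℝ (G.E → ℝ) :=
  Submodule.span ℝ
    {u | ∃ S : Finset G.V, G.crossEdges S Sᶜ ⊆ 𝓔 ∧ u = G.uVec S}

end Multigraph


section Aux

open Multigraph

lemma rightSlope_eq (g : ℝ → ℝ) (t c μ : ℝ) (htc : t < c)
    (h : ∀ s ∈ Set.Icc t c, g s = g t + μ * (s - t)) : rightSlope g t = μ := by
  have H0 : HasDerivWithinAt (fun s => g t + μ * (s - t)) μ (Set.Ici t) t := by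
    simpa using (((hasDerivAt_id t).sub_const t).const_mul μ |>.const_add (g t)).hasDerivWithinAt
  have H : HasDerivWithinAt g μ (Set.Ici t) t := by
    refine H0.congr_of_eventuallyEq ?_ (by simp)
    have h1 : Set.Iio c ∈ nhdsWithin t (Set.Ici t) := nhdsWithin_le_nhds (Iio_mem_nhds htc)
    filter_upwards [h1, self_mem_nhdsWithin] with s hs1 hs2
    exact h s ⟨hs2, le_of_lt hs1⟩
  exact H.derivWithin (uniqueDiffOn_Ici t t Set.self_mem_Ici)

lemma leftSlope_eq (g : ℝ → ℝ) (t c μ : ℝ) (htc : c < t)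
    (h : ∀ s ∈ Set.Icc c t, g s = g t + μ * (s - t)) : leftSlope g t = μ := by
  have H0 : HasDerivWithinAt (fun s => g t + μ * (s - t)) μ (Set.Iic t) t := by
    simpa using (((hasDerivAt_id t).sub_const t).const_mul μ |>.const_add (g t)).hasDerivWithinAt
  have H : HasDerivWithinAt g μ (Set.Iic t) t := by
    refine H0.congr_of_eventuallyEq ?_ (by simp)
    have h1 : Set.Ioi c ∈ nhdsWithin t (Set.Iic t) := nhdsWithin_le_nhds (Ioi_mem_nhds htc)
    filter_upwards [h1, self_mem_nhdsWithin] with s hs1 hs2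
    exact h s ⟨le_of_lt hs1, hs2⟩
  exact H.derivWithin (uniqueDiffOn_Iic t t Set.self_mem_Iic)

lemma affine_anchor (g : ℝ → ℝ) (a b μ : ℝ) (h : ∀ s ∈ Set.Icc a b, g s = g a + μ * (s - a))
    (t : ℝ) (ht : t ∈ Set.Icc a b) : ∀ s ∈ Set.Icc a b, g s = g t + μ * (s - t) := by
  intro s hs
  rw [h s hs, h t ht]; ring

lemma pl_key (g : ℝ → ℝ) (S : Finset ℝ) :
  ∀ (n : ℕ) (a b : ℝ) (x : Fin (n+1) → ℝ) (m : Fin n → ℤ),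
    x 0 = a → x (Fin.last n) = b → Monotone x →
    (∀ i : Fin n, ∀ t ∈ Set.Icc (x i.castSucc) (x i.succ),
        g t = g (x i.castSucc) + (m i : ℝ) * (t - x i.castSucc)) →
    a < b →
    (∀ t ∈ Set.Ioo a b, t ∉ S → leftSlope g t = rightSlope g t) →
    (∃ k : ℤ, rightSlope g a = k) ∧
    g b - g a = rightSlope g a * (b - a)
        - ∑ t ∈ S.filter (fun t => t ∈ Set.Ioo a b), (leftSlope g t - rightSlope g t) * (b - t) ∧
    leftSlope g b = rightSlope g a - ∑ t ∈ S.filter (fun t => t ∈ Set.Ioo a b), (leftSlope g t - rightSlope g t) := by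
  intro n
  induction n with
  | zero =>
    intro a b x m hx0 hxl _ _ hab _
    exact absurd (hx0.symm.trans hxl) hab.ne
  | succ n IH =>
    intro a b x m hx0 hxl hmono haff hab hjump
    set c := x 1 with hc
    have hac : a ≤ c := hx0 ▸ hmono (Fin.zero_le _)
    have hcb : c ≤ b := hxl ▸ hmono (Fin.le_last _)
    -- tail data
    have tail : ∀ i : Fin n, ∀ t ∈ Set.Icc ((x ∘ Fin.succ) i.castSucc) ((x ∘ Fin.succ) i.succ),
        g t = g ((x ∘ Fin.succ) i.castSucc) + ((m ∘ Fin.succ) i : ℝ) * (t - (x ∘ Fin.succ) i.castSucc) := by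
      intro i t ht
      have := haff i.succ t
      simp only [Function.comp_apply, ← Fin.succ_castSucc] at *
      exact this ht
    have htail0 : (x ∘ Fin.succ) 0 = c := rfl
    have htaill : (x ∘ Fin.succ) (Fin.last n) = b := by
      rw [Function.comp_apply, Fin.succ_last]; exact hxl
    have htailmono : Monotone (x ∘ Fin.succ) := hmono.comp (fun i j hij => Fin.succ_le_succ_iff.mpr hij)
    rcases eq_or_lt_of_le hac with hca | hca
    · -- degenerate first piece
      exact IH a b (x ∘ Fin.succ) (m ∘ Fin.succ) (htail0.trans hca.symm) htaill htailmono tail hab hjump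
    · -- first piece [a,c] nondegenerate, slope m 0
      have haff0 : ∀ t ∈ Set.Icc a c, g t = g a + ((m 0 : ℤ) : ℝ) * (t - a) := by
        have := haff 0
        simpa [hx0, hc] using this
      have hra : rightSlope g a = ((m 0 : ℤ) : ℝ) :=
        rightSlope_eq g a c _ hca (affine_anchor g a c _ haff0 a ⟨le_refl a, hac⟩)
      -- slopes inside (a,c): both equal m 0
      have hin : ∀ t ∈ Set.Ioo a c, leftSlope g t = ((m 0:ℤ):ℝ) ∧ rightSlope g t = ((m 0:ℤ):ℝ) := by
        intro t ht
        have anc := affine_anchor g a c _ haff0 t ⟨le_of_lt ht.1, le_of_lt ht.2⟩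
        exact ⟨leftSlope_eq g t a _ ht.1 (fun s hs => anc s ⟨hs.1, le_trans hs.2 ht.2.le⟩),
          rightSlope_eq g t c _ ht.2 (fun s hs => anc s ⟨le_trans ht.1.le hs.1, hs.2⟩)⟩
      have hlc : leftSlope g c = ((m 0:ℤ):ℝ) :=
        leftSlope_eq g c a _ hca (affine_anchor g a c _ haff0 c ⟨hac, le_refl c⟩)
      rcases eq_or_lt_of_le hcb with hcb' | hcb'
      · -- c = b : g affine on [a,b]
        subst hcb'
        have hsum0 : ∀ t ∈ S.filter (fun t => t ∈ Set.Ioo a c), (leftSlope g t - rightSlope g t) = 0 := by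
          intro t ht
          rcases Finset.mem_filter.mp ht with ⟨_, ht2⟩
          rcases hin t ht2 with ⟨h1, h2⟩
          rw [h1, h2, sub_self]
        refine ⟨⟨m 0, hra⟩, ?_, ?_⟩
        · rw [Finset.sum_eq_zero (fun t ht => by rw [hsum0 t ht, zero_mul]), hra]
          have := haff0 c ⟨hac, le_refl c⟩
          linarith
        · rw [Finset.sum_eq_zero hsum0, hra, hlc, sub_zero]
      · -- c < b : use IH on [c,b]
        have hjump' : ∀ t ∈ Set.Ioo c b, t ∉ S → leftSlope g t = rightSlope g t := by
          intro t ht hts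
          exact hjump t ⟨lt_trans hca ht.1, ht.2⟩ hts
        obtain ⟨⟨k, hrc⟩, Hgb, Hlb⟩ :=
          IH c b (x ∘ Fin.succ) (m ∘ Fin.succ) htail0 htaill htailmono tail hcb' hjump'
        set rc := rightSlope g c with hrcdef
        set jmp : ℝ → ℝ := fun t => leftSlope g t - rightSlope g t with hjmp
        -- sum splitting
        have hsplit : ∀ w : ℝ → ℝ,
            ∑ t ∈ S.filter (fun t => t ∈ Set.Ioo a b), jmp t * w t
              = jmp c * w c + ∑ t ∈ S.filter (fun t => t ∈ Set.Ioo c b), jmp t * w t := by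
          intro w
          have hBsub : S.filter (fun t => t ∈ Set.Ico c b) ⊆ S.filter (fun t => t ∈ Set.Ioo a b) := by
            intro t ht
            rcases Finset.mem_filter.mp ht with ⟨h1, h2, h3⟩
            exact Finset.mem_filter.mpr ⟨h1, lt_of_lt_of_le hca h2, h3⟩
          have hzero : ∀ t ∈ S.filter (fun t => t ∈ Set.Ioo a b),
              t ∉ S.filter (fun t => t ∈ Set.Ico c b) → jmp t * w t = 0 := by
            intro t ht htn
            rcases Finset.mem_filter.mp ht with ⟨h1, h2, h3⟩
            have htc : t < c := by
              by_contra hge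
              exact htn (Finset.mem_filter.mpr ⟨h1, le_of_not_gt hge, h3⟩)
            rcases hin t ⟨h2, htc⟩ with ⟨hl, hr⟩
            simp [hjmp, hl, hr]
          rw [← Finset.sum_subset hBsub hzero]
          by_cases hcS : c ∈ S
          · have : S.filter (fun t => t ∈ Set.Ico c b) = insert c (S.filter (fun t => t ∈ Set.Ioo c b)) := by
              ext t
              simp only [Finset.mem_filter, Finset.mem_insert, Set.mem_Ico, Set.mem_Ioo]
              constructor
              · rintro ⟨h1, h2, h3⟩
                rcases eq_or_lt_of_le h2 with h | h
                · exact Or.inl h.symm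
                · exact Or.inr ⟨h1, h, h3⟩
              · rintro (rfl | ⟨h1, h2, h3⟩)
                · exact ⟨hcS, le_refl _, hcb'⟩
                · exact ⟨h1, le_of_lt h2, h3⟩
            rw [this, Finset.sum_insert (by simp [Set.mem_Ioo])]
          · have hjc : jmp c = 0 := by
              have := hjump c ⟨hca, hcb'⟩ hcS
              simp [hjmp, this]
            have : S.filter (fun t => t ∈ Set.Ico c b) = S.filter (fun t => t ∈ Set.Ioo c b) := by
              ext t
              simp only [Finset.mem_filter, Set.mem_Ico, Set.mem_Ioo]
              constructor
              · rintro ⟨h1, h2, h3⟩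
                rcases eq_or_lt_of_le h2 with h | h
                · exact absurd (h ▸ h1) hcS
                · exact ⟨h1, h, h3⟩
              · rintro ⟨h1, h2, h3⟩; exact ⟨h1, le_of_lt h2, h3⟩
            rw [this, hjc, zero_mul, zero_add]
        have hjc : jmp c = ((m 0:ℤ):ℝ) - rc := by simp [hjmp, hlc, hrcdef]
        have hgca : g c - g a = ((m 0:ℤ):ℝ) * (c - a) := by
          have := haff0 c ⟨hac, le_refl c⟩; linarith
        refine ⟨⟨m 0, hra⟩, ?_, ?_⟩
        · have h1 := hsplit (fun t => b - t)
          rw [h1, hra, hjc]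
          linarith
        · have h2 := hsplit (fun _ => 1)
          simp only [mul_one] at h2
          have h2' : ∑ t ∈ S.filter (fun t => t ∈ Set.Ioo a b), (leftSlope g t - rightSlope g t)
              = jmp c + ∑ t ∈ S.filter (fun t => t ∈ Set.Ioo c b), (leftSlope g t - rightSlope g t) := h2
          rw [h2', hra, hjc]
          linarith


lemma const_pl (L C : ℝ) (hL : 0 ≤ L) : PiecewiseLinear L (fun _ => C) := by
  refine ⟨1, ![0, L], ![0], rfl, rfl, ?_, ?_⟩
  · intro i j hij
    fin_cases i <;> fin_cases j <;> simp_all (config := {decide := true}) <;> linarith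
  · intro i t _
    fin_cases i <;> simp

lemma ramp_pl (a b L C : ℝ) (σz : ℤ) (ha : 0 ≤ a) (hab : a ≤ b) (hbL : b ≤ L) :
    PiecewiseLinear L (fun t => C + (σz : ℝ) * min (max t a) b) := by
  refine ⟨3, ![0, a, b, L], ![0, σz, 0], rfl, rfl, ?_, ?_⟩
  · intro i j hij
    fin_cases i <;> fin_cases j <;> simp_all (config := {decide := true}) <;> linarith
  · intro i t ht
    fin_cases i <;>
      norm_num [Fin.mk_one, Fin.castSucc, Fin.castAdd, Fin.castLE, Fin.succ, Fin.isValue,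
        Matrix.cons_val_zero, Matrix.cons_val_one, Matrix.head_cons, Matrix.cons_val_two,
        Matrix.tail_cons, Matrix.cons_val_three, Matrix.cons_val_fin_one] at ht ⊢
    · rw [max_eq_right ht.2, max_eq_right ha]; left; rfl
    · rw [max_eq_left ht.1, min_eq_left ht.2, min_eq_left hab]; ring
    · exact Or.inl (Or.inl ht.1)

lemma rightSlope_ramp_zero (a b L C σ : ℝ) (ha : 0 < a) (hab : a ≤ b) :
    rightSlope (fun t => C + σ * min (max t a) b) 0 = 0 := by
  apply rightSlope_eq _ 0 a 0 ha
  intro s hs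
  rw [max_eq_right hs.2, max_eq_right (le_of_lt ha)]
  ring

lemma leftSlope_ramp_zero (a b L C σ : ℝ) (hab : a ≤ b) (hbL : b < L) :
    leftSlope (fun t => C + σ * min (max t a) b) L = 0 := by
  apply leftSlope_eq _ L b 0 hbL
  intro s hs
  rw [max_eq_left (le_trans hab hs.1), min_eq_right hs.1,
    max_eq_left (le_trans hab (le_of_lt hbL)), min_eq_right (le_of_lt hbL)]
  ring

lemma ramp_jump (a b L C σ : ℝ) (ha : 0 < a) (hab : a ≤ b) (hbL : b < L)
    (t : ℝ) (ht0 : 0 < t) (htL : t < L) :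
    leftSlope (fun s => C + σ * min (max s a) b) t
      - rightSlope (fun s => C + σ * min (max s a) b) t
      = σ * ((if b = t then (1:ℝ) else 0) - (if a = t then 1 else 0)) := by
  set g : ℝ → ℝ := fun s => C + σ * min (max s a) b with hg
  have gval_lo : ∀ s, s ≤ a → g s = C + σ * a := by
    intro s hs; simp only [hg]; rw [max_eq_right hs, min_eq_left hab]
  have gval_mid : ∀ s, a ≤ s → s ≤ b → g s = C + σ * s := by
    intro s h1 h2; simp only [hg]; rw [max_eq_left h1, min_eq_left h2]
  have gval_hi : ∀ s, b ≤ s → g s = C + σ * b := by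
    intro s hs; simp only [hg]; rw [max_eq_left (le_trans hab hs), min_eq_right hs]
  rcases lt_trichotomy t a with h | h | h
  · have hl : leftSlope g t = 0 := by
      apply leftSlope_eq _ t (t-1) 0 (by linarith)
      intro s hs
      rw [gval_lo s (by linarith [hs.2]), gval_lo t (le_of_lt h)]; ring
    have hr : rightSlope g t = 0 := by
      apply rightSlope_eq _ t a 0 h
      intro s hs
      rw [gval_lo s hs.2, gval_lo t (le_of_lt h)]; ring
    rw [hl, hr, if_neg (by linarith : b ≠ t), if_neg (by linarith : a ≠ t)]; ring
  · subst h
    have hl : leftSlope g t = 0 := by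
      apply leftSlope_eq _ t (t-1) 0 (by linarith)
      intro s hs
      rw [gval_lo s hs.2, gval_lo t (le_refl t)]; ring
    rcases eq_or_lt_of_le hab with hab' | hab'
    · subst hab'
      have hr : rightSlope g t = 0 := by
        apply rightSlope_eq _ t (t+1) 0 (by linarith)
        intro s hs
        rw [gval_hi s hs.1, gval_lo t (le_refl t)]; ring
      rw [hl, hr, if_pos rfl]; ring
    · have hr : rightSlope g t = σ := by
        apply rightSlope_eq _ t b σ hab'
        intro s hs
        rw [gval_mid s hs.1 hs.2, gval_mid t (le_refl t) hab]; ring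
      rw [hl, hr, if_neg (by linarith : b ≠ t), if_pos rfl]; ring
  · rcases lt_trichotomy t b with h2 | h2 | h2
    · have hl : leftSlope g t = σ := by
        apply leftSlope_eq _ t a σ h
        intro s hs
        rw [gval_mid s hs.1 (by linarith [hs.2]), gval_mid t (le_of_lt h) (le_of_lt h2)]; ring
      have hr : rightSlope g t = σ := by
        apply rightSlope_eq _ t b σ h2
        intro s hs
        rw [gval_mid s (le_trans (le_of_lt h) hs.1) hs.2, gval_mid t (le_of_lt h) (le_of_lt h2)]; ring
      rw [hl, hr, if_neg (by linarith : b ≠ t), if_neg (by linarith : a ≠ t)]; ring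
    · subst h2
      have hl : leftSlope g t = σ := by
        apply leftSlope_eq _ t a σ h
        intro s hs
        rw [gval_mid s hs.1 hs.2, gval_mid t (le_of_lt h) (le_refl t)]; ring
      have hr : rightSlope g t = 0 := by
        apply rightSlope_eq _ t (t+1) 0 (by linarith)
        intro s hs
        rw [gval_hi s hs.1, gval_hi t (le_refl t)]; ring
      rw [hl, hr, if_pos rfl, if_neg (by linarith : a ≠ t)]; ring
    · have hl : leftSlope g t = 0 := by
        apply leftSlope_eq _ t b 0 h2
        intro s hs
        rw [gval_hi s hs.1, gval_hi t (le_of_lt h2)]; ring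
      have hr : rightSlope g t = 0 := by
        apply rightSlope_eq _ t (t+1) 0 (by linarith)
        intro s hs
        rw [gval_hi s (le_trans (le_of_lt h2) hs.1), gval_hi t (le_of_lt h2)]; ring
      rw [hl, hr, if_neg (by linarith : b ≠ t), if_neg (by linarith : a ≠ t)]; ring

lemma rightSlope_const (C t : ℝ) : rightSlope (fun _ => C) t = 0 :=
  rightSlope_eq _ t (t+1) 0 (lt_add_one t) (fun s _ => by ring)

lemma leftSlope_const (C t : ℝ) : leftSlope (fun _ => C) t = 0 :=
  leftSlope_eq _ t (t-1) 0 (by linarith) (fun s _ => by ring)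


lemma crossEdges_split (G : Multigraph) (S : Finset G.V) (e : G.E)
    (h : ¬ (G.s e ∈ S ↔ G.t e ∈ S)) : e ∈ G.crossEdges S Sᶜ := by
  simp only [crossEdges, Finset.mem_filter, Finset.mem_univ, true_and, Finset.mem_sdiff,
    Finset.mem_compl]
  tauto

lemma dF_mem (G : Multigraph) (𝓔 : Finset G.E) :
    ∀ (k : ℕ) (F : G.V → ℝ), (Finset.univ.image F).card ≤ k →
      (∀ e, e ∉ 𝓔 → F (G.s e) = F (G.t e)) →
      (fun e => F (G.t e) - F (G.s e)) ∈ G.Lspace 𝓔 := by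
  intro k
  induction k with
  | zero =>
    intro F hcard _
    have hV : (Finset.univ : Finset G.V) = ∅ :=
      Finset.image_eq_empty.mp (Finset.card_eq_zero.mp (Nat.le_zero.mp hcard))
    have : (fun e => F (G.t e) - F (G.s e)) = 0 := by
      funext e
      exact absurd (Finset.mem_univ (G.s e)) (by simp [hV])
    rw [this]; exact zero_mem _
  | succ k IH =>
    intro F hcard h𝓔
    by_cases hle : (Finset.univ.image F).card ≤ k
    · exact IH F hle h𝓔
    have hne : (Finset.univ.image F).Nonempty := by
      rw [Finset.nonempty_iff_ne_empty]
      intro h; rw [h] at hle; simp at hle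
    set I := Finset.univ.image F with hI
    set c := I.max' hne with hc
    set S := Finset.univ.filter (fun v => F v = c) with hS
    have hmemS : ∀ v, v ∈ S ↔ F v = c := fun v => by simp [hS]
    by_cases hconst : ∀ v : G.V, F v = c
    · have : (fun e => F (G.t e) - F (G.s e)) = 0 := by
        funext e; rw [hconst, hconst]; simp
      rw [this]; exact zero_mem _
    push_neg at hconst
    obtain ⟨v₀, hv₀⟩ := hconst
    have hne' : (I.erase c).Nonempty :=
      ⟨F v₀, Finset.mem_erase.mpr ⟨hv₀, Finset.mem_image_of_mem F (Finset.mem_univ v₀)⟩⟩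
    set c' := (I.erase c).max' hne' with hc'
    set F' : G.V → ℝ := fun v => if F v = c then c' else F v with hF'
    have himg : Finset.univ.image F' ⊆ I.erase c := by
      intro w hw
      obtain ⟨v, _, rfl⟩ := Finset.mem_image.mp hw
      by_cases hv : F v = c
      · simp only [hF', if_pos hv]
        exact (I.erase c).max'_mem hne'
      · simp only [hF', if_neg hv]
        exact Finset.mem_erase.mpr ⟨hv, Finset.mem_image_of_mem F (Finset.mem_univ v)⟩
    have hcardI : I.card = k + 1 := le_antisymm hcard (by omega)
    have hcard' : (Finset.univ.image F').card ≤ k := by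
      calc (Finset.univ.image F').card ≤ (I.erase c).card := Finset.card_le_card himg
        _ = I.card - 1 := Finset.card_erase_of_mem (I.max'_mem hne)
        _ ≤ k := by omega
    have h𝓔' : ∀ e, e ∉ 𝓔 → F' (G.s e) = F' (G.t e) := by
      intro e he
      simp only [hF', h𝓔 e he]
    have hIH := IH F' hcard' h𝓔'
    have hcross : G.crossEdges S Sᶜ ⊆ 𝓔 := by
      intro e he
      by_contra he𝓔
      have heq := h𝓔 e he𝓔
      simp only [crossEdges, Finset.mem_filter, Finset.mem_sdiff, Finset.mem_compl] at he
      rcases he.2 with ⟨⟨h1, _⟩, ⟨_, h3⟩⟩ | ⟨⟨h1, _⟩, ⟨_, h3⟩⟩ <;>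
        rw [hmemS] at h1 h3 <;> [exact h3 (heq ▸ h1); exact h3 (heq.symm ▸ h1)]
    have huS : G.uVec S ∈ G.Lspace 𝓔 := Submodule.subset_span ⟨S, hcross, rfl⟩
    have hid : (fun e => F (G.t e) - F (G.s e))
        = (fun e => F' (G.t e) - F' (G.s e)) + (c' - c) • G.uVec S := by
      funext e
      simp only [Pi.add_apply, Pi.smul_apply, smul_eq_mul, uVec, hF', hmemS]
      by_cases hs : F (G.s e) = c <;> by_cases ht : F (G.t e) = c <;>
        simp [hs, ht] <;> ring
    rw [hid]
    exact add_mem hIH (Submodule.smul_mem _ _ huS)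

lemma span_to_F (G : Multigraph) (𝓔 : Finset G.E) (u : G.E → ℝ) (hu : u ∈ G.Lspace 𝓔) :
    ∃ F : G.V → ℝ, (∀ e, F (G.t e) - F (G.s e) = u e) ∧
      ∀ e, e ∉ 𝓔 → F (G.s e) = F (G.t e) := by
  refine Submodule.span_induction ?_ ?_ ?_ ?_ hu
  · rintro w ⟨S, hcross, rfl⟩
    refine ⟨fun v => if v ∈ S then (-1 : ℝ) else 0, ?_, ?_⟩
    · intro e
      simp only [uVec]
      by_cases hs : G.s e ∈ S <;> by_cases ht : G.t e ∈ S <;> simp [hs, ht]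
    · intro e he
      have : e ∉ G.crossEdges S Sᶜ := fun h => he (hcross h)
      by_cases hs : G.s e ∈ S <;> by_cases ht : G.t e ∈ S <;> simp [hs, ht]
      · exact absurd (crossEdges_split G S e (by tauto)) this
      · exact absurd (crossEdges_split G S e (by tauto)) this
  · exact ⟨0, by simp, by simp⟩
  · rintro u v _ _ ⟨F1, h1, h1'⟩ ⟨F2, h2, h2'⟩
    exact ⟨F1 + F2, fun e => by simp only [Pi.add_apply]; rw [← h1 e, ← h2 e]; ring, fun e he => by simp [h1' e he, h2' e he]⟩
  · rintro a u _ ⟨F1, h1, h1'⟩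
    exact ⟨a • F1, fun e => by simp [← h1 e]; ring, fun e he => by simp [h1' e he]⟩


end Aux

/-- for an `𝓔`-divisor `𝓓 = ∑_{e∈𝓔}(p_e − q_e)` on the tropical curve
`X`, the vector `u_𝓓 ∈ ℝ^𝓔` with coordinates `ε(e)·ℓ(q_e p_e) = p_e − q_e` lies in
`L_𝓔` if and only if `𝓓` is a principal divisor. -/
theorem uD_mem_L_iff_principal (G : Multigraph) (ℓ : G.E → ℝ)
    (hℓ : ∀ e, 0 < ℓ e) (𝓔 : Finset G.E) (p q : G.E → ℝ)
    (hp : ∀ e ∈ 𝓔, 0 < p e ∧ p e < ℓ e) (hq : ∀ e ∈ 𝓔, 0 < q e ∧ q e < ℓ e) :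
    ((fun e => if e ∈ 𝓔 then p e - q e else 0) ∈ G.Lspace 𝓔 ↔
      ∃ f : RatFn G ℓ,
        (∀ v, f.div (Sum.inl v) = 0) ∧
        (∀ x : {y : G.E × ℝ // 0 < y.2 ∧ y.2 < ℓ y.1},
          f.div (Sum.inr x) =
            (if x.1.1 ∈ 𝓔 ∧ p x.1.1 = x.1.2 then (1 : ℝ) else 0)
              - (if x.1.1 ∈ 𝓔 ∧ q x.1.1 = x.1.2 then (1 : ℝ) else 0))) := by
  constructor
  · -- u ∈ L → principal
    intro hu
    obtain ⟨F, hF, hFc⟩ := span_to_F G 𝓔 _ hu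
    set gE : G.E → ℝ → ℝ := fun e =>
      if e ∈ 𝓔 then
        (if q e ≤ p e then (fun t => (F (G.s e) - q e) + ((1 : ℤ) : ℝ) * min (max t (q e)) (p e))
         else (fun t => (F (G.s e) + p e) + ((-1 : ℤ) : ℝ) * min (max t (p e)) (q e)))
      else (fun _ => F (G.s e)) with hgE
    have hz : ∀ e, rightSlope (gE e) 0 = 0 ∧ leftSlope (gE e) (ℓ e) = 0 := by
      intro e
      by_cases he : e ∈ 𝓔
      · rcases hp e he with ⟨hp1, hp2⟩; rcases hq e he with ⟨hq1, hq2⟩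
        by_cases hqp : q e ≤ p e
        · rw [hgE]; simp only [if_pos he, if_pos hqp]
          exact ⟨rightSlope_ramp_zero _ _ (ℓ e) _ _ hq1 hqp,
            leftSlope_ramp_zero _ _ _ _ _ hqp hp2⟩
        · rw [hgE]; simp only [if_pos he, if_neg hqp]
          exact ⟨rightSlope_ramp_zero _ _ (ℓ e) _ _ hp1 (le_of_not_ge hqp),
            leftSlope_ramp_zero _ _ _ _ _ (le_of_not_ge hqp) hq2⟩
      · rw [hgE]; simp only [if_neg he]
        exact ⟨rightSlope_const _ _, leftSlope_const _ _⟩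
    have hj : ∀ e t, 0 < t → t < ℓ e →
        leftSlope (gE e) t - rightSlope (gE e) t
          = (if e ∈ 𝓔 ∧ p e = t then (1:ℝ) else 0) - (if e ∈ 𝓔 ∧ q e = t then 1 else 0) := by
      intro e t ht0 htl
      by_cases he : e ∈ 𝓔
      · rcases hp e he with ⟨hp1, hp2⟩; rcases hq e he with ⟨hq1, hq2⟩
        by_cases hqp : q e ≤ p e
        · rw [hgE]; simp only [if_pos he, if_pos hqp]
          rw [ramp_jump (q e) (p e) (ℓ e) _ _ hq1 hqp hp2 t ht0 htl]
          simp [he]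
        · rw [hgE]; simp only [if_pos he, if_neg hqp]
          rw [ramp_jump (p e) (q e) (ℓ e) _ _ hp1 (le_of_not_ge hqp) hq2 t ht0 htl]
          simp only [he, true_and]
          push_cast
          ring
      · rw [hgE]; simp only [if_neg he, he, false_and, if_neg, ite_false]
        rw [leftSlope_const, rightSlope_const]
    refine ⟨⟨F, gE, ?_, ?_, ?_⟩, ?_, ?_⟩
    · intro e
      by_cases he : e ∈ 𝓔
      · rcases hp e he with ⟨hp1, hp2⟩; rcases hq e he with ⟨hq1, hq2⟩
        by_cases hqp : q e ≤ p e
        · rw [hgE]; simp only [if_pos he, if_pos hqp]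
          rw [max_eq_right hq1.le, min_eq_left hqp]
          push_cast; ring
        · rw [hgE]; simp only [if_pos he, if_neg hqp]
          rw [max_eq_right hp1.le, min_eq_left (le_of_not_ge hqp)]
          push_cast; ring
      · rw [hgE]; simp only [if_neg he]
    · intro e
      by_cases he : e ∈ 𝓔
      · have hFe : F (G.t e) - F (G.s e) = p e - q e := by rw [hF e, if_pos he]
        rcases hp e he with ⟨hp1, hp2⟩; rcases hq e he with ⟨hq1, hq2⟩
        by_cases hqp : q e ≤ p e
        · rw [hgE]; simp only [if_pos he, if_pos hqp]
          rw [max_eq_left hq2.le, min_eq_right hp2.le]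
          push_cast; linarith
        · rw [hgE]; simp only [if_pos he, if_neg hqp]
          rw [max_eq_left hp2.le, min_eq_right hq2.le]
          push_cast; linarith
      · have hFe : F (G.t e) - F (G.s e) = 0 := by rw [hF e, if_neg he]
        rw [hgE]; simp only [if_neg he]
        linarith
    · intro e
      by_cases he : e ∈ 𝓔
      · rcases hp e he with ⟨hp1, hp2⟩; rcases hq e he with ⟨hq1, hq2⟩
        by_cases hqp : q e ≤ p e
        · rw [hgE]; simp only [if_pos he, if_pos hqp]
          exact ramp_pl _ _ _ _ 1 hq1.le hqp hp2.le
        · rw [hgE]; simp only [if_pos he, if_neg hqp]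
          exact ramp_pl _ _ _ _ (-1) hp1.le (le_of_not_ge hqp) hq2.le
      · rw [hgE]; simp only [if_neg he]
        exact const_pl _ _ (hℓ e).le
    · intro v
      simp only [RatFn.div]
      apply Finset.sum_eq_zero
      intro e _
      rw [(hz e).1, (hz e).2]
      simp
    · rintro ⟨⟨e, t⟩, ht0, htl⟩
      simpa only [RatFn.div] using hj e t ht0 htl
  · -- principal → u ∈ L
    rintro ⟨f, hv, hx⟩
    have jmp_at : ∀ (e : G.E) (t : ℝ), 0 < t → t < ℓ e →
        leftSlope (f.edgeFn e) t - rightSlope (f.edgeFn e) t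
          = (if e ∈ 𝓔 ∧ p e = t then (1:ℝ) else 0) - (if e ∈ 𝓔 ∧ q e = t then 1 else 0) := by
      intro e t h1 h2
      simpa only [RatFn.div] using hx ⟨(e, t), h1, h2⟩
    have key : ∀ e : G.E, (∃ k : ℤ, rightSlope (f.edgeFn e) 0 = k) ∧
        f.vertVal (G.t e) - f.vertVal (G.s e)
          = rightSlope (f.edgeFn e) 0 * ℓ e + (if e ∈ 𝓔 then p e - q e else 0) ∧
        leftSlope (f.edgeFn e) (ℓ e) = rightSlope (f.edgeFn e) 0 := by
      intro e
      obtain ⟨n, x, m, h0, hl, hmono, haff⟩ := f.pl e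
      by_cases he : e ∈ 𝓔
      · rcases hp e he with ⟨hp1, hp2⟩; rcases hq e he with ⟨hq1, hq2⟩
        by_cases hpq : p e = q e
        · have hjump : ∀ t ∈ Set.Ioo (0:ℝ) (ℓ e), t ∉ ({q e} : Finset ℝ) →
              leftSlope (f.edgeFn e) t = rightSlope (f.edgeFn e) t := by
            intro t ht hts
            have hne : q e ≠ t := fun hc => hts (Finset.mem_singleton.mpr hc.symm)
            have h := jmp_at e t ht.1 ht.2
            rw [if_neg (fun hc => hne (hpq ▸ hc.2)), if_neg (fun hc => hne hc.2)] at h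
            linarith
          obtain ⟨hk, Heq, Hlb⟩ :=
            pl_key (f.edgeFn e) {q e} n 0 (ℓ e) x m h0 hl hmono haff (hℓ e) hjump
          have hfilter : ({q e} : Finset ℝ).filter (fun t => t ∈ Set.Ioo (0:ℝ) (ℓ e)) = {q e} := by
            apply Finset.filter_true_of_mem
            intro t ht
            rw [Finset.mem_singleton] at ht
            subst ht; exact ⟨hq1, hq2⟩
          have hjq : leftSlope (f.edgeFn e) (q e) - rightSlope (f.edgeFn e) (q e) = 0 := by
            have h := jmp_at e (q e) hq1 hq2
            rw [if_pos ⟨he, hpq⟩, if_pos ⟨he, rfl⟩] at h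
            linarith
          rw [hfilter, Finset.sum_singleton, hjq] at Heq Hlb
          refine ⟨hk, ?_, ?_⟩
          · rw [f.source_eq e, f.target_eq e] at Heq
            rw [if_pos he, hpq]
            linarith [Heq]
          · rw [Hlb]; ring
        · have hjump : ∀ t ∈ Set.Ioo (0:ℝ) (ℓ e), t ∉ ({p e, q e} : Finset ℝ) →
              leftSlope (f.edgeFn e) t = rightSlope (f.edgeFn e) t := by
            intro t ht hts
            simp only [Finset.mem_insert, Finset.mem_singleton] at hts
            push_neg at hts
            have h := jmp_at e t ht.1 ht.2
            rw [if_neg (fun hc => hts.1 hc.2.symm), if_neg (fun hc => hts.2 hc.2.symm)] at h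
            linarith
          obtain ⟨hk, Heq, Hlb⟩ :=
            pl_key (f.edgeFn e) {p e, q e} n 0 (ℓ e) x m h0 hl hmono haff (hℓ e) hjump
          have hfilter : ({p e, q e} : Finset ℝ).filter (fun t => t ∈ Set.Ioo (0:ℝ) (ℓ e))
              = {p e, q e} := by
            apply Finset.filter_true_of_mem
            intro t ht
            rcases Finset.mem_insert.mp ht with rfl | ht
            · exact ⟨hp1, hp2⟩
            · rw [Finset.mem_singleton] at ht
              subst ht; exact ⟨hq1, hq2⟩
          have hjp : leftSlope (f.edgeFn e) (p e) - rightSlope (f.edgeFn e) (p e) = 1 := by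
            have h := jmp_at e (p e) hp1 hp2
            rw [if_pos ⟨he, rfl⟩, if_neg (fun hc => hpq hc.2.symm)] at h
            linarith
          have hjq : leftSlope (f.edgeFn e) (q e) - rightSlope (f.edgeFn e) (q e) = -1 := by
            have h := jmp_at e (q e) hq1 hq2
            rw [if_neg (fun hc => hpq hc.2), if_pos ⟨he, rfl⟩] at h
            linarith
          rw [hfilter, Finset.sum_pair hpq, hjp, hjq] at Heq Hlb
          refine ⟨hk, ?_, ?_⟩
          · rw [f.source_eq e, f.target_eq e] at Heq
            rw [if_pos he]
            linarith [Heq]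
          · rw [Hlb]; ring
      · have hjump : ∀ t ∈ Set.Ioo (0:ℝ) (ℓ e), t ∉ (∅ : Finset ℝ) →
            leftSlope (f.edgeFn e) t = rightSlope (f.edgeFn e) t := by
          intro t ht _
          have h := jmp_at e t ht.1 ht.2
          rw [if_neg (fun hc => he hc.1), if_neg (fun hc => he hc.1)] at h
          linarith
        obtain ⟨hk, Heq, Hlb⟩ :=
          pl_key (f.edgeFn e) ∅ n 0 (ℓ e) x m h0 hl hmono haff (hℓ e) hjump
        simp only [Finset.filter_empty, Finset.sum_empty] at Heq Hlb
        refine ⟨hk, ?_, ?_⟩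
        · rw [f.source_eq e, f.target_eq e] at Heq
          rw [if_neg he]
          linarith [Heq]
        · rw [Hlb]; ring
    set r : G.E → ℝ := fun e => rightSlope (f.edgeFn e) 0 with hr
    set u : G.E → ℝ := fun e => if e ∈ 𝓔 then p e - q e else 0 with hu
    have hvert : ∀ v, ∑ e, ((if G.t e = v then r e else 0) - (if G.s e = v then r e else 0)) = 0 := by
      intro v
      have h := hv v
      simp only [RatFn.div] at h
      have hcong : ∑ e, ((if G.t e = v then r e else 0) - (if G.s e = v then r e else 0))
          = ∑ e, ((if G.s e = v then -rightSlope (f.edgeFn e) 0 else 0)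
              + (if G.t e = v then leftSlope (f.edgeFn e) (ℓ e) else 0)) := by
        apply Finset.sum_congr rfl
        intro e _
        rw [(key e).2.2]
        by_cases h1 : G.s e = v <;> by_cases h2 : G.t e = v <;> simp [h1, h2, hr] <;> ring
      rw [hcong, h]
    have energy : ∑ e, (r e * u e + r e * r e * ℓ e) = 0 := by
      have h2 : ∑ e, r e * (f.vertVal (G.t e) - f.vertVal (G.s e)) = 0 := by
        have hstep : ∀ e : G.E, r e * (f.vertVal (G.t e) - f.vertVal (G.s e))
            = ∑ v, ((if G.t e = v then r e else 0) - (if G.s e = v then r e else 0)) * f.vertVal v := by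
          intro e
          have : ∀ v, ((if G.t e = v then r e else 0) - (if G.s e = v then r e else 0)) * f.vertVal v
              = (if G.t e = v then r e * f.vertVal v else 0) - (if G.s e = v then r e * f.vertVal v else 0) := by
            intro v
            by_cases h1 : G.s e = v <;> by_cases h2 : G.t e = v <;> simp [h1, h2]
          rw [Finset.sum_congr rfl (fun v _ => this v), Finset.sum_sub_distrib,
            Finset.sum_ite_eq, Finset.sum_ite_eq]
          simp [mul_sub]
        rw [Finset.sum_congr rfl (fun e _ => hstep e), Finset.sum_comm]
        apply Finset.sum_eq_zero
        intro v _
        rw [← Finset.sum_mul, hvert v, zero_mul]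
      rw [← h2]
      apply Finset.sum_congr rfl
      intro e _
      rw [(key e).2.1]
      simp only [hu, hr]
      ring
    have habs : ∀ e, |u e| < ℓ e := by
      intro e
      by_cases he : e ∈ 𝓔
      · rcases hp e he with ⟨hp1, hp2⟩; rcases hq e he with ⟨hq1, hq2⟩
        rw [hu]; simp only [if_pos he]
        rw [abs_lt]; constructor <;> linarith
      · rw [hu]; simp only [if_neg he, abs_zero]
        exact hℓ e
    have hterm : ∀ e, 0 ≤ r e * u e + r e * r e * ℓ e := by
      intro e
      by_cases hre : r e = 0
      · simp [hre]
      · obtain ⟨k, hk⟩ := (key e).1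
        have hkr : r e = (k:ℝ) := hk
        have hk1 : (1:ℝ) ≤ |r e| := by
          have hk0 : k ≠ 0 := by
            intro h0
            exact hre (by rw [hkr, h0]; simp)
          rw [hkr, ← Int.cast_abs]
          exact_mod_cast Int.one_le_abs hk0
        have h2 : -(|r e| * |u e|) ≤ r e * u e := by
          rw [← abs_mul]; exact neg_abs_le _
        have h3 : r e * r e * ℓ e = |r e| * (|r e| * ℓ e) := by
          rw [← abs_mul_abs_self]; ring
        have h4 : |r e| * |u e| ≤ |r e| * ℓ e :=
          mul_le_mul_of_nonneg_left (habs e).le (abs_nonneg _)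
        have h5 : (1:ℝ) * (|r e| * ℓ e) ≤ |r e| * (|r e| * ℓ e) :=
          mul_le_mul_of_nonneg_right hk1 (mul_nonneg (abs_nonneg _) (hℓ e).le)
        linarith [h2, h3, h4, h5]
    have hstrict : ∀ e, r e ≠ 0 → 0 < r e * u e + r e * r e * ℓ e := by
      intro e hre
      obtain ⟨k, hk⟩ := (key e).1
      have hkr : r e = (k:ℝ) := hk
      have hk1 : (1:ℝ) ≤ |r e| := by
        have hk0 : k ≠ 0 := by
          intro h0
          exact hre (by rw [hkr, h0]; simp)
        rw [hkr, ← Int.cast_abs]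
        exact_mod_cast Int.one_le_abs hk0
      have h2 : -(|r e| * |u e|) ≤ r e * u e := by
        rw [← abs_mul]; exact neg_abs_le _
      have h3 : r e * r e * ℓ e = |r e| * (|r e| * ℓ e) := by
        rw [← abs_mul_abs_self]; ring
      have h4 : |r e| * |u e| < |r e| * ℓ e :=
        mul_lt_mul_of_pos_left (habs e) (by linarith : (0:ℝ) < |r e|)
      have h5 : (1:ℝ) * (|r e| * ℓ e) ≤ |r e| * (|r e| * ℓ e) :=
        mul_le_mul_of_nonneg_right hk1 (mul_nonneg (abs_nonneg _) (hℓ e).le)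
      linarith [h2, h3, h4, h5]
    have hr0 : ∀ e, r e = 0 := by
      by_contra hcon
      push_neg at hcon
      obtain ⟨e₀, he₀⟩ := hcon
      have hpos : 0 < ∑ e, (r e * u e + r e * r e * ℓ e) :=
        Finset.sum_pos' (fun e _ => hterm e) ⟨e₀, Finset.mem_univ _, hstrict e₀ he₀⟩
      linarith [energy]
    have hFeq : ∀ e, f.vertVal (G.t e) - f.vertVal (G.s e) = u e := by
      intro e
      have h := (key e).2.1
      have hre0 : rightSlope (f.edgeFn e) 0 = 0 := hr0 e
      rw [hre0] at h
      rw [hu]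
      linarith [h]
    have hFc : ∀ e, e ∉ 𝓔 → f.vertVal (G.s e) = f.vertVal (G.t e) := by
      intro e he
      have h := hFeq e
      rw [hu] at h
      simp only [if_neg he] at h
      linarith
    have hmem := dF_mem G 𝓔 (Finset.univ.image f.vertVal).card f.vertVal (le_refl _) hFc
    have heq : u = fun e => f.vertVal (G.t e) - f.vertVal (G.s e) := by
      funext e
      rw [hFeq e]
    show u ∈ G.Lspace 𝓔
    rw [heq]
    exact hmem
end

section
/- Let Γ be a graph and 𝓔 ⊆ E(Γ). Consider the linear maps f_𝓔: ℝ^{E(Γ^𝓔)} → ℝ^{E(Γ)} sending the basis vector of an edge e' to that of the edge under it, and g_𝓔: ℝ^{E(Γ^𝓔)} → ℝ^𝓔 sending the basis vector of e' to that of e if e' = e^s (the half-edge incident to the source of e) and to 0 otherwise. Then the map (f_𝓔, g_𝓔): ℝ^{E(Γ^𝓔)} → ℝ^{E(Γ)} × ℝ^𝓔 is a linear isomorphism, and it maps the subspace 𝓛_𝓔 (spanned by the vectors w_V over subsets V ⊆ V(Γ) with E(V,V^c) ⊆ 𝓔) onto {0} × L_𝓔. -/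
open scoped Classical

namespace Multigraph

variable (G : Multigraph)

/-- The edge set of the subdivision `Γ^𝓔`: one edge for each `e ∉ 𝓔`, and two edges
`e^s` (Boolean `true`, incident to the source) and `e^t` (Boolean `false`, incident to
the target) for each `e ∈ 𝓔`. -/
def EIdx (𝓔 : Finset G.E) : Type :=
  {e : G.E // e ∉ 𝓔} ⊕ ({e : G.E // e ∈ 𝓔} × Bool)

noncomputable instance (𝓔 : Finset G.E) : Fintype (G.EIdx 𝓔) := by
  unfold EIdx; infer_instance

/-- The map `(f_𝓔, g_𝓔) : ℝ^{E(Γ^𝓔)} → ℝ^{E(Γ)} × ℝ^𝓔`: `f_𝓔` sums the coordinates of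
the edges lying over each edge of `Γ`, and `g_𝓔` records the coordinate of `e^s`. -/
noncomputable def Fmap (𝓔 : Finset G.E) (x : G.EIdx 𝓔 → ℝ) :
    (G.E → ℝ) × ({e : G.E // e ∈ 𝓔} → ℝ) :=
  (fun e =>
    if h : e ∈ 𝓔 then x (Sum.inr (⟨e, h⟩, true)) + x (Sum.inr (⟨e, h⟩, false))
    else x (Sum.inl ⟨e, h⟩),
   fun e => x (Sum.inr (e, true)))

/-- The vector `w_V ∈ ℝ^{E(Γ^𝓔)}`: coefficient `+1` at half-edges over `E(V,V^c)`
incident to `V`, `−1` at those incident to `V^c`, and `0` elsewhere. -/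
noncomputable def wVec (𝓔 : Finset G.E) (S : Finset G.V) : G.EIdx 𝓔 → ℝ
  | Sum.inl _ => 0
  | Sum.inr (e, b) =>
      let v := if b then G.s e.1 else G.t e.1
      let w := if b then G.t e.1 else G.s e.1
      if v ∈ S ∧ w ∉ S then 1 else if w ∈ S ∧ v ∉ S then -1 else 0

/-- The subspace `𝓛_𝓔 ⊆ ℝ^{E(Γ^𝓔)}` spanned by the vectors `w_V` over all `V ⊆ V(Γ)`
with `E(V,V^c) ⊆ 𝓔`. -/
noncomputable def LLspace (𝓔 : Finset G.E) : Submodule ℝ (G.EIdx 𝓔 → ℝ) :=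
  Submodule.span ℝ
    {w | ∃ S : Finset G.V, G.crossEdges S Sᶜ ⊆ 𝓔 ∧ w = G.wVec 𝓔 S}

/-- The vector `u_V ∈ ℝ^𝓔`. -/
noncomputable def uVecR (𝓔 : Finset G.E) (S : Finset G.V) :
    {e : G.E // e ∈ 𝓔} → ℝ := fun e =>
  (if G.s e.1 ∈ S ∧ G.t e.1 ∉ S then (1 : ℝ) else 0)
    - (if G.t e.1 ∈ S ∧ G.s e.1 ∉ S then (1 : ℝ) else 0)

/-- The subspace `L_𝓔 ⊆ ℝ^𝓔` spanned by the vectors `u_V` over all `V ⊆ V(Γ)` with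
`E(V,V^c) ⊆ 𝓔`. -/
noncomputable def LspaceR (𝓔 : Finset G.E) : Submodule ℝ ({e : G.E // e ∈ 𝓔} → ℝ) :=
  Submodule.span ℝ
    {u | ∃ S : Finset G.V, G.crossEdges S Sᶜ ⊆ 𝓔 ∧ u = G.uVecR 𝓔 S}

end Multigraph

/-! The inverse of `(f_𝓔, g_𝓔)` reads off `x(e^s) = g_𝓔(x)_e` and `x(e^t) = f_𝓔(x)_e − g_𝓔(x)_e`.
Each `w_V` carries opposite coefficients on `e^s` and `e^t`, so `f_𝓔` kills it, while its
coefficient on `e^s` is that of `u_V`: `(f_𝓔, g_𝓔) w_V = (0, u_V)`. Being linear, the map then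
sends the span `𝓛_𝓔` of the `w_V` onto `{0} × L_𝓔`. -/

namespace Multigraph

variable (G : Multigraph) (𝓔 : Finset G.E)

noncomputable def fmapInv (y : (G.E → ℝ) × ({e : G.E // e ∈ 𝓔} → ℝ)) : G.EIdx 𝓔 → ℝ
  | Sum.inl e => y.1 e.1
  | Sum.inr (e, true) => y.2 e
  | Sum.inr (e, false) => y.1 e.1 - y.2 e

noncomputable def fmapEquiv :
    (G.EIdx 𝓔 → ℝ) ≃ₗ[ℝ] (G.E → ℝ) × ({e : G.E // e ∈ 𝓔} → ℝ) where
  toFun := G.Fmap 𝓔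
  map_add' x y := by
    ext e
    · simp only [Fmap, Prod.fst_add, Pi.add_apply]
      split_ifs
      exacts [add_add_add_comm _ _ _ _, rfl]
    · rfl
  map_smul' c x := by
    ext e
    · simp only [Fmap, Prod.smul_fst, Pi.smul_apply, smul_eq_mul, RingHom.id_apply]
      split_ifs
      exacts [(mul_add _ _ _).symm, rfl]
    · rfl
  invFun := G.fmapInv 𝓔
  left_inv x := by
    funext i
    rcases i with e | ⟨e, _ | _⟩ <;> simp [fmapInv, Fmap, e.2]
  right_inv y := by
    ext e
    · simp only [Fmap]
      split_ifs <;> simp [fmapInv]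
    · rfl

@[simp]
lemma coe_fmapEquiv : ⇑(G.fmapEquiv 𝓔) = G.Fmap 𝓔 := rfl

lemma Fmap_wVec (S : Finset G.V) : G.Fmap 𝓔 (G.wVec 𝓔 S) = (0, G.uVecR 𝓔 S) := by
  ext e
  · by_cases he : e ∈ 𝓔 <;> by_cases hs : G.s e ∈ S <;> by_cases ht : G.t e ∈ S <;>
      simp [Fmap, wVec, he, hs, ht]
  · by_cases hs : G.s e.1 ∈ S <;> by_cases ht : G.t e.1 ∈ S <;>
      simp [Fmap, wVec, uVecR, hs, ht]

lemma map_fmapEquiv_LLspace :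
    (G.LLspace 𝓔).map (G.fmapEquiv 𝓔).toLinearMap =
      (⊥ : Submodule ℝ (G.E → ℝ)).prod (G.LspaceR 𝓔) := by
  rw [← Submodule.map_inr, LLspace, LspaceR, Submodule.map_span, Submodule.map_span]
  congr 1
  ext y
  simp [Fmap_wVec]

end Multigraph

/-- the map `(f_𝓔, g_𝓔) : ℝ^{E(Γ^𝓔)} → ℝ^{E(Γ)} × ℝ^𝓔` is a linear
isomorphism, and it maps `𝓛_𝓔` onto `{0} × L_𝓔`. -/
theorem Fmap_linear_bijective_image (G : Multigraph) (𝓔 : Finset G.E) :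
    IsLinearMap ℝ (G.Fmap 𝓔) ∧ Function.Bijective (G.Fmap 𝓔) ∧
      G.Fmap 𝓔 '' (G.LLspace 𝓔 : Set (G.EIdx 𝓔 → ℝ)) =
        {y : (G.E → ℝ) × ({e : G.E // e ∈ 𝓔} → ℝ) | y.1 = 0 ∧ y.2 ∈ G.LspaceR 𝓔} := by
  exact ⟨(G.fmapEquiv 𝓔).toLinearMap.isLinear, (G.fmapEquiv 𝓔).bijective,
    congrArg SetLike.coe (G.map_fmapEquiv_LLspace 𝓔)⟩
end
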